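/- arXiv:1905.10736 — 7 statements merged into one kernel-verified Lean document; each statement's English description precedes it below -/
import Mathlib

section
/- Let n ≥ 1, let E = EuclideanSpace ℝ (Fin n), and let L be a star in E with radial function ρ_L. Define f : E → E by f 0 = 0 and f x = ρ_L(‖x‖⁻¹ • x) • x for x ≠ 0. Then f is continuous on Metric.closedBall (0:E) 1, injective on Metric.closedBall (0:E) 1, f '' (Metric.closedBall (0:E) 1) = L, f 0 = 0, and for every x ∈ Metric.closedBall (0:E) 1 one has f '' (segment ℝ 0 x) = segment ℝ 0 (f x); consequently (since the closed ball is compact) f restricts to a homeomorphism of the closed unit ball onto L. -/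
noncomputable def radial {n : ℕ} (L : Set (EuclideanSpace ℝ (Fin n)))
    (u : EuclideanSpace ℝ (Fin n)) : ℝ :=
  sSup {c : ℝ | 0 ≤ c ∧ c • u ∈ L}

def IsStar {n : ℕ} (L : Set (EuclideanSpace ℝ (Fin n))) : Prop :=
  IsCompact L ∧ (0 : EuclideanSpace ℝ (Fin n)) ∈ interior L ∧
    (∀ x ∈ L, segment ℝ 0 x ⊆ L) ∧
    ContinuousOn (radial L) (Metric.sphere (0 : EuclideanSpace ℝ (Fin n)) 1)

def IsStarPartialHomeo {n : ℕ}
    (α : PartialEquiv (EuclideanSpace ℝ (Fin n)) (EuclideanSpace ℝ (Fin n))) : Prop :=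
  IsStar α.source ∧ IsStar α.target ∧
    ContinuousOn α α.source ∧ ContinuousOn α.symm α.target ∧
    α 0 = 0 ∧ ∀ x ∈ α.source, α '' (segment ℝ 0 x) = segment ℝ 0 (α x)

open Metric Set Filter

lemma unit_smul_pos {n : ℕ} {c : ℝ} (hc : 0 < c) (y : EuclideanSpace ℝ (Fin n)) :
    ‖c • y‖⁻¹ • (c • y) = ‖y‖⁻¹ • y := by
  rcases eq_or_ne y 0 with rfl | hy
  · simp
  rw [norm_smul, Real.norm_eq_abs, abs_of_pos hc, smul_smul]
  congr 1
  rw [mul_inv, mul_comm c⁻¹ ‖y‖⁻¹, mul_assoc, inv_mul_cancel₀ hc.ne', mul_one]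

theorem stmt_2 (n : ℕ) (hn : 1 ≤ n) (L : Set (EuclideanSpace ℝ (Fin n)))
    (hL : IsStar L) (f : EuclideanSpace ℝ (Fin n) → EuclideanSpace ℝ (Fin n))
    (hf0 : f 0 = 0)
    (hf : ∀ x : EuclideanSpace ℝ (Fin n), x ≠ 0 → f x = radial L (‖x‖⁻¹ • x) • x) :
    ContinuousOn f (Metric.closedBall (0 : EuclideanSpace ℝ (Fin n)) 1) ∧
    Set.InjOn f (Metric.closedBall (0 : EuclideanSpace ℝ (Fin n)) 1) ∧
    f '' (Metric.closedBall (0 : EuclideanSpace ℝ (Fin n)) 1) = L ∧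
    f 0 = 0 ∧
    (∀ x ∈ Metric.closedBall (0 : EuclideanSpace ℝ (Fin n)) 1,
      f '' (segment ℝ 0 x) = segment ℝ 0 (f x)) ∧
    ∃ φ : (Metric.closedBall (0 : EuclideanSpace ℝ (Fin n)) 1 :
        Set (EuclideanSpace ℝ (Fin n))) ≃ₜ L,
      ∀ x : (Metric.closedBall (0 : EuclideanSpace ℝ (Fin n)) 1 :
        Set (EuclideanSpace ℝ (Fin n))), (φ x : EuclideanSpace ℝ (Fin n)) = f x := by
  obtain ⟨hcomp, h0int, hstar, hρcont⟩ := hL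
  have h0L : (0 : (EuclideanSpace ℝ (Fin n))) ∈ L := interior_subset h0int
  obtain ⟨R, hR⟩ := hcomp.isBounded.subset_closedBall 0
  obtain ⟨ε, hε, hεL⟩ := Metric.mem_nhds_iff.mp (mem_interior_iff_mem_nhds.mp h0int)
  have hunit : ∀ x : (EuclideanSpace ℝ (Fin n)), x ≠ 0 → ‖x‖⁻¹ • x ∈ sphere (0 : (EuclideanSpace ℝ (Fin n))) 1 := by
    intro x hx
    rw [mem_sphere_zero_iff_norm, norm_smul, Real.norm_eq_abs, abs_inv, abs_norm,
      inv_mul_cancel₀ (norm_ne_zero_iff.mpr hx)]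
  have hSne : ∀ u : (EuclideanSpace ℝ (Fin n)), (0 : ℝ) ∈ {c : ℝ | 0 ≤ c ∧ c • u ∈ L} :=
    fun u => ⟨le_refl 0, by simpa using h0L⟩
  have hSbdd : ∀ u ∈ sphere (0 : (EuclideanSpace ℝ (Fin n))) 1, BddAbove {c : ℝ | 0 ≤ c ∧ c • u ∈ L} := by
    intro u hu
    refine ⟨R, fun c hc => ?_⟩
    have h := hR hc.2
    rwa [mem_closedBall_zero_iff, norm_smul, mem_sphere_zero_iff_norm.mp hu, mul_one,
      Real.norm_eq_abs, abs_of_nonneg hc.1] at h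
  have hρpos : ∀ u ∈ sphere (0 : (EuclideanSpace ℝ (Fin n))) 1, 0 < radial L u := by
    intro u hu
    have h2 : ε / 2 ∈ {c : ℝ | 0 ≤ c ∧ c • u ∈ L} := by
      refine ⟨by positivity, hεL ?_⟩
      rw [mem_ball_zero_iff, norm_smul, mem_sphere_zero_iff_norm.mp hu, mul_one,
        Real.norm_eq_abs, abs_of_pos (by positivity)]
      linarith
    calc (0:ℝ) < ε / 2 := by positivity
      _ ≤ radial L u := le_csSup (hSbdd u hu) h2
  have hρmem : ∀ u ∈ sphere (0 : (EuclideanSpace ℝ (Fin n))) 1, radial L u • u ∈ L := by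
    intro u hu
    have hclosed : IsClosed {c : ℝ | 0 ≤ c ∧ c • u ∈ L} := by
      have heq : {c : ℝ | 0 ≤ c ∧ c • u ∈ L} = Set.Ici 0 ∩ (fun c : ℝ => c • u) ⁻¹' L := rfl
      rw [heq]
      exact isClosed_Ici.inter (hcomp.isClosed.preimage (by continuity))
    exact (hclosed.csSup_mem ⟨0, hSne u⟩ (hSbdd u hu)).2
  have hmem_iff : ∀ u ∈ sphere (0 : (EuclideanSpace ℝ (Fin n))) 1, ∀ c : ℝ, 0 ≤ c → (c • u ∈ L ↔ c ≤ radial L u) := by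
    intro u hu c hc
    constructor
    · intro h; exact le_csSup (hSbdd u hu) ⟨hc, h⟩
    · intro h
      have hρ := hρpos u hu
      have heq : c • u = (1 - c / radial L u) • (0 : (EuclideanSpace ℝ (Fin n))) + (c / radial L u) • (radial L u • u) := by
        rw [smul_zero, zero_add, smul_smul, div_mul_cancel₀ _ hρ.ne']
      rw [heq]
      exact hstar _ (hρmem u hu)
        ⟨1 - c / radial L u, c / radial L u,
          sub_nonneg.mpr ((div_le_one hρ).mpr h), div_nonneg hc hρ.le, by ring, rfl⟩
  -- continuity
  have hcontf : ContinuousOn f (closedBall (0 : (EuclideanSpace ℝ (Fin n))) 1) := by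
    obtain ⟨C, hC⟩ := (isCompact_sphere (0 : (EuclideanSpace ℝ (Fin n))) 1).exists_bound_of_continuousOn hρcont
    intro x hx
    rcases eq_or_ne x 0 with rfl | hx0
    · have htend : Tendsto f (nhdsWithin 0 (closedBall (0:(EuclideanSpace ℝ (Fin n))) 1)) (nhds 0) := by
        apply squeeze_zero_norm (a := fun x : (EuclideanSpace ℝ (Fin n)) => C * ‖x‖)
        · intro y
          rcases eq_or_ne y 0 with rfl | hy0
          · simp [hf0]
          · rw [hf y hy0, norm_smul]
            exact mul_le_mul_of_nonneg_right (hC _ (hunit y hy0)) (norm_nonneg y)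
        · have h2 : Filter.Tendsto (fun x : EuclideanSpace ℝ (Fin n) => C * ‖x‖)
              (nhds 0) (nhds (C * ‖(0 : EuclideanSpace ℝ (Fin n))‖)) :=
            (continuous_const.mul continuous_norm).tendsto 0
          simpa using h2.mono_left nhdsWithin_le_nhds
      rw [ContinuousWithinAt, hf0]
      exact htend
    · have hfeq : f = fun y : (EuclideanSpace ℝ (Fin n)) => radial L (‖y‖⁻¹ • y) • y := by
        funext y
        rcases eq_or_ne y 0 with rfl | hy0
        · simp [hf0]
        · exact hf y hy0
      have hg : ContinuousOn (fun y : (EuclideanSpace ℝ (Fin n)) => radial L (‖y‖⁻¹ • y) • y) ({0}ᶜ : Set (EuclideanSpace ℝ (Fin n))) := by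
        refine ContinuousOn.smul (f := fun y : EuclideanSpace ℝ (Fin n) => radial L (‖y‖⁻¹ • y)) ?_ (continuousOn_id (s := ({0}ᶜ : Set (EuclideanSpace ℝ (Fin n)))))
        refine hρcont.comp ?_ (fun y hy => hunit y hy)
        exact (continuous_norm.continuousOn.inv₀
          (fun y hy => norm_ne_zero_iff.mpr hy)).smul continuousOn_id
      rw [hfeq]
      exact ((hg.continuousAt (isOpen_compl_singleton.mem_nhds hx0)).continuousWithinAt)
  -- injectivity
  have hinj : Set.InjOn f (closedBall (0 : (EuclideanSpace ℝ (Fin n))) 1) := by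
    intro x hx y hy hxy
    rcases eq_or_ne x 0 with rfl | hx0
    · rcases eq_or_ne y 0 with rfl | hy0
      · rfl
      · exfalso
        rw [hf0, hf y hy0] at hxy
        exact hy0 ((smul_eq_zero.mp hxy.symm).resolve_left (hρpos _ (hunit y hy0)).ne')
    · rcases eq_or_ne y 0 with rfl | hy0
      · exfalso
        rw [hf0, hf x hx0] at hxy
        exact hx0 ((smul_eq_zero.mp hxy).resolve_left (hρpos _ (hunit x hx0)).ne')
      · have hρx := hρpos _ (hunit x hx0)
        have hρy := hρpos _ (hunit y hy0)
        have hxy' : radial L (‖x‖⁻¹ • x) • x = radial L (‖y‖⁻¹ • y) • y := by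
          rw [← hf x hx0, ← hf y hy0, hxy]
        have h1 : x = ((radial L (‖x‖⁻¹ • x))⁻¹ * radial L (‖y‖⁻¹ • y)) • y := by
          rw [← smul_smul, ← hxy', smul_smul, inv_mul_cancel₀ hρx.ne', one_smul]
        have hc : 0 < (radial L (‖x‖⁻¹ • x))⁻¹ * radial L (‖y‖⁻¹ • y) :=
          mul_pos (inv_pos.mpr hρx) hρy
        have hdir : ‖x‖⁻¹ • x = ‖y‖⁻¹ • y := by
          rw [h1]; exact unit_smul_pos hc y
        rw [hdir] at hxy'
        exact smul_right_injective (EuclideanSpace ℝ (Fin n)) hρy.ne' hxy'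
  -- image
  have himg : f '' closedBall (0 : (EuclideanSpace ℝ (Fin n))) 1 = L := by
    apply Set.Subset.antisymm
    · rintro _ ⟨x, hx, rfl⟩
      rcases eq_or_ne x 0 with rfl | hx0
      · rw [hf0]; exact h0L
      · rw [hf x hx0]
        have hu := hunit x hx0
        have hx1 : ‖x‖ ≤ 1 := mem_closedBall_zero_iff.mp hx
        have heq : radial L (‖x‖⁻¹ • x) • x
            = (radial L (‖x‖⁻¹ • x) * ‖x‖) • (‖x‖⁻¹ • x) := by
          rw [smul_smul, mul_assoc, mul_inv_cancel₀ (norm_ne_zero_iff.mpr hx0), mul_one]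
        rw [heq]
        refine (hmem_iff _ hu _ (mul_nonneg (hρpos _ hu).le (norm_nonneg x))).mpr ?_
        calc radial L (‖x‖⁻¹ • x) * ‖x‖ ≤ radial L (‖x‖⁻¹ • x) * 1 :=
              mul_le_mul_of_nonneg_left hx1 (hρpos _ hu).le
          _ = radial L (‖x‖⁻¹ • x) := mul_one _
    · intro y hy
      rcases eq_or_ne y 0 with rfl | hy0
      · exact ⟨0, mem_closedBall_self zero_le_one, hf0⟩
      · have hu := hunit y hy0
        have hρ := hρpos _ hu
        have hyρ : ‖y‖ ≤ radial L (‖y‖⁻¹ • y) := by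
          refine (hmem_iff _ hu _ (norm_nonneg y)).mp ?_
          rwa [smul_smul, mul_inv_cancel₀ (norm_ne_zero_iff.mpr hy0), one_smul]
        have hune : (‖y‖⁻¹ • y : (EuclideanSpace ℝ (Fin n))) ≠ 0 := by
          intro h; rw [h] at hu; simp at hu
        have hcpos : 0 < ‖y‖ / radial L (‖y‖⁻¹ • y) := div_pos (norm_pos_iff.mpr hy0) hρ
        refine ⟨(‖y‖ / radial L (‖y‖⁻¹ • y)) • (‖y‖⁻¹ • y), ?_, ?_⟩
        · rw [mem_closedBall_zero_iff, norm_smul, mem_sphere_zero_iff_norm.mp hu, mul_one,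
            Real.norm_eq_abs, abs_of_pos hcpos]
          exact (div_le_one hρ).mpr hyρ
        · have hne : (‖y‖ / radial L (‖y‖⁻¹ • y)) • (‖y‖⁻¹ • y) ≠ (0 : (EuclideanSpace ℝ (Fin n))) :=
            smul_ne_zero hcpos.ne' hune
          rw [hf _ hne, unit_smul_pos hcpos (‖y‖⁻¹ • y),
            mem_sphere_zero_iff_norm.mp hu, inv_one, one_smul, smul_smul, mul_comm,
            div_mul_cancel₀ _ hρ.ne', smul_smul, mul_inv_cancel₀ (norm_ne_zero_iff.mpr hy0),
            one_smul]
  -- segment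
  have hseg : ∀ x ∈ closedBall (0 : (EuclideanSpace ℝ (Fin n))) 1, f '' segment ℝ 0 x = segment ℝ 0 (f x) := by
    intro x hx
    have key : ∀ t ∈ Icc (0 : ℝ) 1, f (t • x) = t • f x := by
      intro t ht
      rcases eq_or_ne x 0 with rfl | hx0
      · simp [hf0]
      rcases eq_or_lt_of_le ht.1 with h0t | htpos
      · rw [← h0t]; simp [hf0]
      · rw [hf _ (smul_ne_zero htpos.ne' hx0), hf x hx0, unit_smul_pos htpos x,
          smul_smul, smul_smul, mul_comm]
    rw [segment_eq_image ℝ (0 : (EuclideanSpace ℝ (Fin n))) x, segment_eq_image ℝ (0 : (EuclideanSpace ℝ (Fin n))) (f x), Set.image_image]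
    simp only [smul_zero, zero_add]
    exact Set.image_congr key
  -- homeomorphism
  have hbij : Set.BijOn f (closedBall (0 : (EuclideanSpace ℝ (Fin n))) 1) L :=
    ⟨fun x hx => himg ▸ Set.mem_image_of_mem f hx, hinj, by rw [Set.SurjOn, himg]⟩
  haveI : CompactSpace (closedBall (0 : (EuclideanSpace ℝ (Fin n))) 1) :=
    isCompact_iff_compactSpace.mp (isCompact_closedBall (0 : (EuclideanSpace ℝ (Fin n))) 1)
  let e : (closedBall (0 : (EuclideanSpace ℝ (Fin n))) 1 : Set (EuclideanSpace ℝ (Fin n))) ≃ L := Set.BijOn.equiv f hbij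
  have hcont_e : Continuous e := by
    have h1 : Continuous (fun x : (closedBall (0 : (EuclideanSpace ℝ (Fin n))) 1 : Set (EuclideanSpace ℝ (Fin n))) => f x) := hcontf.restrict
    exact Continuous.subtype_mk h1 _
  refine ⟨hcontf, hinj, himg, hf0, hseg, hcont_e.homeoOfEquivCompactToT2, fun x => rfl⟩
end

section
/- Let n ≥ 1, let E = EuclideanSpace ℝ (Fin n), and let L₁ and L₂ be stars in E. Then there exists a star partial homeomorphism α of E with α.source = L₁ and α.target = L₂. (Any two stars are star-homeomorphic.) -/
variable {n : ℕ} {L : Set (EuclideanSpace ℝ (Fin n))}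

lemma star_exists_eps (hL : IsStar L) : ∃ ε > 0, Metric.ball (0:EuclideanSpace ℝ (Fin n)) ε ⊆ L := by
  have := hL.2.1
  rw [mem_interior_iff_mem_nhds, Metric.mem_nhds_iff] at this
  exact this

lemma star_exists_R (hL : IsStar L) : ∃ R > 0, L ⊆ Metric.closedBall 0 R := by
  obtain ⟨R, hR⟩ := hL.1.isBounded.subset_closedBall 0
  exact ⟨max R 1, lt_of_lt_of_le one_pos (le_max_right _ _),
    hR.trans (Metric.closedBall_subset_closedBall (le_max_left _ _))⟩

lemma radial_bddAbove (hL : IsStar L) {u : EuclideanSpace ℝ (Fin n)} (hu : ‖u‖ = 1) :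
    BddAbove {c : ℝ | 0 ≤ c ∧ c • u ∈ L} := by
  obtain ⟨R, _, hR⟩ := star_exists_R hL
  refine ⟨R, fun c hc => ?_⟩
  have := hR hc.2
  rw [Metric.mem_closedBall, dist_zero_right, norm_smul, hu, mul_one] at this
  calc c ≤ |c| := le_abs_self c
  _ ≤ R := by rwa [Real.norm_eq_abs] at this

lemma radial_ge (hL : IsStar L) {u : EuclideanSpace ℝ (Fin n)} (hu : ‖u‖ = 1)
    {c : ℝ} (hc : 0 ≤ c) (hm : c • u ∈ L) : c ≤ radial L u :=
  le_csSup (radial_bddAbove hL hu) ⟨hc, hm⟩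

lemma radial_pos (hL : IsStar L) {u : EuclideanSpace ℝ (Fin n)} (hu : ‖u‖ = 1) :
    0 < radial L u := by
  obtain ⟨ε, hε, hb⟩ := star_exists_eps hL
  have : (ε/2) • u ∈ L := by
    apply hb
    rw [Metric.mem_ball, dist_zero_right, norm_smul, hu, mul_one, Real.norm_eq_abs,
      abs_of_pos (by linarith)]
    linarith
  have := radial_ge hL hu (by linarith) this
  linarith

lemma radial_le (hL : IsStar L) {u : EuclideanSpace ℝ (Fin n)} (hu : ‖u‖ = 1)
    {R : ℝ} (hR : L ⊆ Metric.closedBall 0 R) : radial L u ≤ R := by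
  have hne : {c : ℝ | 0 ≤ c ∧ c • u ∈ L}.Nonempty :=
    ⟨0, le_refl 0, by simpa using (star_exists_eps hL).choose_spec.2 (by simp [(star_exists_eps hL).choose_spec.1])⟩
  apply csSup_le hne
  intro c hc
  have := hR hc.2
  rw [Metric.mem_closedBall, dist_zero_right, norm_smul, hu, mul_one, Real.norm_eq_abs,
    abs_of_nonneg hc.1] at this
  exact this

lemma radial_smul_mem (hL : IsStar L) {u : EuclideanSpace ℝ (Fin n)} (hu : ‖u‖ = 1) :
    (radial L u) • u ∈ L := by
  have hcl : IsClosed {c : ℝ | 0 ≤ c ∧ c • u ∈ L} := by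
    apply IsClosed.inter (isClosed_le continuous_const continuous_id)
    exact IsClosed.preimage (by continuity) hL.1.isClosed
  have hne : {c : ℝ | 0 ≤ c ∧ c • u ∈ L}.Nonempty := by
    refine ⟨0, le_refl 0, by simpa using (star_exists_eps hL).choose_spec.2 (by simp [(star_exists_eps hL).choose_spec.1])⟩
  exact (hcl.csSup_mem hne (radial_bddAbove hL hu)).2

lemma smul_mem_iff_radial (hL : IsStar L) {u : EuclideanSpace ℝ (Fin n)} (hu : ‖u‖ = 1)
    {c : ℝ} (hc : 0 ≤ c) : c • u ∈ L ↔ c ≤ radial L u := by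
  constructor
  · exact radial_ge hL hu hc
  · intro h
    have hρ := radial_pos hL hu
    have : c • u ∈ segment ℝ 0 ((radial L u) • u) := by
      rw [segment_eq_image ℝ]
      exact ⟨c / radial L u, ⟨div_nonneg hc hρ.le, div_le_one_of_le₀ h hρ.le⟩,
        by simp [smul_smul, div_mul_cancel₀ _ hρ.ne']⟩
    exact hL.2.2.1 _ (radial_smul_mem hL hu) this

lemma mem_star_iff (hL : IsStar L) {x : EuclideanSpace ℝ (Fin n)} (hx : x ≠ 0) :
    x ∈ L ↔ ‖x‖ ≤ radial L (‖x‖⁻¹ • x) := by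
  have hnx : ‖x‖ ≠ 0 := norm_ne_zero_iff.mpr hx
  have hu : ‖(‖x‖⁻¹ • x)‖ = 1 := by
    rw [norm_smul, Real.norm_eq_abs, abs_inv, abs_of_nonneg (norm_nonneg x),
      inv_mul_cancel₀ hnx]
  have := smul_mem_iff_radial hL hu (norm_nonneg x)
  rwa [smul_smul, mul_inv_cancel₀ hnx, one_smul] at this

lemma unit_norm {x : EuclideanSpace ℝ (Fin n)} (hx : x ≠ 0) : ‖(‖x‖⁻¹ • x)‖ = 1 := by
  rw [norm_smul, Real.norm_eq_abs, abs_inv, abs_of_nonneg (norm_nonneg x),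
    inv_mul_cancel₀ (norm_ne_zero_iff.mpr hx)]

noncomputable def starMap (L₁ L₂ : Set (EuclideanSpace ℝ (Fin n)))
    (x : EuclideanSpace ℝ (Fin n)) : EuclideanSpace ℝ (Fin n) :=
  (radial L₂ (‖x‖⁻¹ • x) / radial L₁ (‖x‖⁻¹ • x)) • x

lemma starMap_zero (L₁ L₂ : Set (EuclideanSpace ℝ (Fin n))) : starMap L₁ L₂ 0 = 0 :=
  smul_zero _

variable {L₁ L₂ : Set (EuclideanSpace ℝ (Fin n))}

lemma ratio_pos (h₁ : IsStar L₁) (h₂ : IsStar L₂) {x : EuclideanSpace ℝ (Fin n)} (hx : x ≠ 0) :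
    0 < radial L₂ (‖x‖⁻¹ • x) / radial L₁ (‖x‖⁻¹ • x) :=
  div_pos (radial_pos h₂ (unit_norm hx)) (radial_pos h₁ (unit_norm hx))

lemma starMap_dir (h₁ : IsStar L₁) (h₂ : IsStar L₂) {x : EuclideanSpace ℝ (Fin n)} (hx : x ≠ 0) :
    ‖starMap L₁ L₂ x‖⁻¹ • starMap L₁ L₂ x = ‖x‖⁻¹ • x := by
  have hrpos := ratio_pos h₁ h₂ hx
  rw [starMap]
  set r := radial L₂ (‖x‖⁻¹ • x) / radial L₁ (‖x‖⁻¹ • x) with hr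
  rw [norm_smul, Real.norm_eq_abs, abs_of_pos hrpos, smul_smul]
  congr 1
  rw [mul_inv, mul_comm r⁻¹ ‖x‖⁻¹, mul_assoc, inv_mul_cancel₀ hrpos.ne', mul_one]

lemma starMap_ne_zero (h₁ : IsStar L₁) (h₂ : IsStar L₂) {x : EuclideanSpace ℝ (Fin n)}
    (hx : x ≠ 0) : starMap L₁ L₂ x ≠ 0 :=
  smul_ne_zero (ratio_pos h₁ h₂ hx).ne' hx

lemma starMap_comp (h₁ : IsStar L₁) (h₂ : IsStar L₂) (x : EuclideanSpace ℝ (Fin n)) :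
    starMap L₂ L₁ (starMap L₁ L₂ x) = x := by
  by_cases hx : x = 0
  · simp [hx, starMap_zero]
  · have hρ₁ := radial_pos h₁ (unit_norm hx)
    have hρ₂ := radial_pos h₂ (unit_norm hx)
    rw [starMap, starMap_dir h₁ h₂ hx, starMap, smul_smul, div_mul_div_comm,
      mul_comm (radial L₁ _), div_self (mul_pos hρ₂ hρ₁).ne', one_smul]

lemma starMap_mem (h₁ : IsStar L₁) (h₂ : IsStar L₂) {x : EuclideanSpace ℝ (Fin n)}
    (hx : x ∈ L₁) : starMap L₁ L₂ x ∈ L₂ := by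
  by_cases h0 : x = 0
  · rw [h0, starMap_zero]; exact interior_subset h₂.2.1
  · rw [mem_star_iff h₂ (starMap_ne_zero h₁ h₂ h0), starMap_dir h₁ h₂ h0]
    have hn : ‖starMap L₁ L₂ x‖ = (radial L₂ (‖x‖⁻¹ • x) / radial L₁ (‖x‖⁻¹ • x)) * ‖x‖ := by
      rw [starMap, norm_smul, Real.norm_eq_abs, abs_of_pos (ratio_pos h₁ h₂ h0)]
    rw [hn]
    have hle : ‖x‖ ≤ radial L₁ (‖x‖⁻¹ • x) := (mem_star_iff h₁ h0).mp hx
    have hρ₁ := radial_pos h₁ (unit_norm h0)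
    have hρ₂ := radial_pos h₂ (unit_norm h0)
    rw [div_mul_eq_mul_div, div_le_iff₀ hρ₁]
    exact mul_le_mul_of_nonneg_left hle hρ₂.le

lemma starMap_homog (h₁ : IsStar L₁) (h₂ : IsStar L₂) {t : ℝ} (ht : 0 ≤ t)
    (x : EuclideanSpace ℝ (Fin n)) : starMap L₁ L₂ (t • x) = t • starMap L₁ L₂ x := by
  rcases eq_or_lt_of_le ht with h | h
  · simp [← h, starMap_zero]
  by_cases hx : x = 0
  · simp [hx, starMap_zero]
  have hdir : ‖(t • x)‖⁻¹ • (t • x) = ‖x‖⁻¹ • x := by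
    rw [norm_smul, Real.norm_eq_abs, abs_of_pos h, mul_inv, smul_smul, mul_comm t⁻¹,
      mul_assoc, inv_mul_cancel₀ h.ne', mul_one]
  rw [starMap, hdir, starMap, smul_comm]

lemma starMap_continuous (h₁ : IsStar L₁) (h₂ : IsStar L₂) :
    Continuous (starMap L₁ L₂) := by
  obtain ⟨ε, hε, hb⟩ := star_exists_eps h₁
  obtain ⟨R, hR, hRb⟩ := star_exists_R h₂
  have hlow : ∀ u : EuclideanSpace ℝ (Fin n), ‖u‖ = 1 → ε / 2 ≤ radial L₁ u := by
    intro u hu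
    apply radial_ge h₁ hu (by linarith)
    apply hb
    rw [Metric.mem_ball, dist_zero_right, norm_smul, hu, mul_one, Real.norm_eq_abs,
      abs_of_pos (by linarith)]
    linarith
  have hq : ContinuousOn (fun x : EuclideanSpace ℝ (Fin n) => ‖x‖⁻¹ • x) {0}ᶜ := by
    exact ContinuousOn.smul ((continuous_norm.continuousOn).inv₀ (fun x hx => norm_ne_zero_iff.mpr hx)) continuousOn_id
  have hmaps : Set.MapsTo (fun x : EuclideanSpace ℝ (Fin n) => ‖x‖⁻¹ • x) {0}ᶜ
      (Metric.sphere 0 1) := fun x hx => by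
    simp [unit_norm hx]
  have hρ : ∀ (L : Set (EuclideanSpace ℝ (Fin n))), IsStar L →
      ContinuousOn (fun x => radial L (‖x‖⁻¹ • x)) ({0}ᶜ : Set (EuclideanSpace ℝ (Fin n))) :=
    fun L hL => hL.2.2.2.comp hq hmaps
  have hcop : ContinuousOn (starMap L₁ L₂) {0}ᶜ := by
    exact ContinuousOn.smul ((hρ L₂ h₂).div (hρ L₁ h₁) (fun x hx => (radial_pos h₁ (unit_norm hx)).ne')) continuousOn_id
  rw [continuous_iff_continuousAt]
  intro x
  by_cases hx : x = 0
  · subst hx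
    rw [ContinuousAt, starMap_zero]
    apply squeeze_zero_norm (a := fun x => (R / (ε/2)) * ‖x‖)
    · intro y
      by_cases hy : y = 0
      · simp [hy, starMap_zero]
      · have hu := unit_norm hy
        have h1 := hlow _ hu
        have h2 := radial_le h₂ hu hRb
        have hρ₂ := radial_pos h₂ hu
        rw [starMap, norm_smul, Real.norm_eq_abs,
          abs_of_pos (ratio_pos h₁ h₂ hy)]
        apply mul_le_mul_of_nonneg_right _ (norm_nonneg y)
        apply div_le_div₀ (by positivity) h2 (by linarith) h1
    · have : Continuous fun y : EuclideanSpace ℝ (Fin n) => (R / (ε/2)) * ‖y‖ := by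
        continuity
      simpa using this.tendsto 0
  · exact hcop.continuousAt (by simp [isOpen_compl_singleton.mem_nhds, hx])

lemma starMap_segment (h₁ : IsStar L₁) (h₂ : IsStar L₂) (x : EuclideanSpace ℝ (Fin n)) :
    starMap L₁ L₂ '' segment ℝ 0 x = segment ℝ 0 (starMap L₁ L₂ x) := by
  rw [segment_eq_image ℝ (0 : EuclideanSpace ℝ (Fin n)) x,
    segment_eq_image ℝ (0 : EuclideanSpace ℝ (Fin n)) (starMap L₁ L₂ x), Set.image_image]
  apply Set.image_congr
  intro t ht
  simp only [smul_zero, zero_add]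
  exact starMap_homog h₁ h₂ ht.1 x

theorem stmt_3 (n : ℕ) (hn : 1 ≤ n) (L₁ L₂ : Set (EuclideanSpace ℝ (Fin n)))
    (h₁ : IsStar L₁) (h₂ : IsStar L₂) :
    ∃ α : PartialEquiv (EuclideanSpace ℝ (Fin n)) (EuclideanSpace ℝ (Fin n)),
      IsStarPartialHomeo α ∧ α.source = L₁ ∧ α.target = L₂ := by
  refine ⟨⟨starMap L₁ L₂, starMap L₂ L₁, L₁, L₂,
    fun x hx => starMap_mem h₁ h₂ hx,
    fun y hy => starMap_mem h₂ h₁ hy,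
    fun x _ => starMap_comp h₁ h₂ x,
    fun y _ => starMap_comp h₂ h₁ y⟩,
    ⟨h₁, h₂, (starMap_continuous h₁ h₂).continuousOn,
      (starMap_continuous h₂ h₁).continuousOn, starMap_zero L₁ L₂,
      fun x _ => starMap_segment h₁ h₂ x⟩, rfl, rfl⟩
end

section
/- Let n ≥ 1, let E = EuclideanSpace ℝ (Fin n), and let α and β be star partial homeomorphisms of E. Then the composition PartialEquiv.trans α β (the partial equivalence with source α.source ∩ α ⁻¹' β.source that applies α first and then β) is again a star partial homeomorphism of E. -/
section StarAux

variable {n : ℕ} {L : Set (EuclideanSpace ℝ (Fin n))}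

lemma mem_segment_zero_iff {x y : EuclideanSpace ℝ (Fin n)} :
    y ∈ segment ℝ 0 x ↔ ∃ t : ℝ, 0 ≤ t ∧ t ≤ 1 ∧ y = t • x := by
  constructor
  · rintro ⟨a, b, ha, hb, hab, rfl⟩
    exact ⟨b, hb, by linarith, by simp⟩
  · rintro ⟨t, h0, h1, rfl⟩
    exact ⟨1 - t, t, by linarith, h0, by ring, by simp⟩

lemma smul_mem_segment_zero {x : EuclideanSpace ℝ (Fin n)} {t : ℝ} (h0 : 0 ≤ t) (h1 : t ≤ 1) :
    t • x ∈ segment ℝ 0 x :=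
  mem_segment_zero_iff.2 ⟨t, h0, h1, rfl⟩

lemma radial_aux (hcomp : IsCompact L) (h0L : (0 : EuclideanSpace ℝ (Fin n)) ∈ L)
    {u : EuclideanSpace ℝ (Fin n)} (hu : ‖u‖ = 1) :
    0 ≤ radial L u ∧ radial L u • u ∈ L ∧ ∀ c : ℝ, 0 ≤ c → c • u ∈ L → c ≤ radial L u := by
  have hne : ({c : ℝ | 0 ≤ c ∧ c • u ∈ L}).Nonempty := ⟨0, le_refl 0, by simpa using h0L⟩
  have hbdd : BddAbove {c : ℝ | 0 ≤ c ∧ c • u ∈ L} := by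
    obtain ⟨r, hr⟩ := hcomp.isBounded.subset_closedBall 0
    refine ⟨r, fun c hc => ?_⟩
    have := hr hc.2
    rwa [Metric.mem_closedBall, dist_zero_right, norm_smul, hu, mul_one,
      Real.norm_eq_abs, abs_of_nonneg hc.1] at this
  have hclosed : IsClosed {c : ℝ | 0 ≤ c ∧ c • u ∈ L} := by
    have h : {c : ℝ | 0 ≤ c ∧ c • u ∈ L} = Set.Ici 0 ∩ (fun c : ℝ => c • u) ⁻¹' L := by
      ext c; simp [Set.mem_Ici]
    rw [h]
    exact isClosed_Ici.inter (hcomp.isClosed.preimage (continuous_id.smul continuous_const))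
  have hm := hclosed.csSup_mem hne hbdd
  exact ⟨hm.1, hm.2, fun c h1 h2 => le_csSup hbdd ⟨h1, h2⟩⟩

lemma smul_mem_of_le_radial (hcomp : IsCompact L)
    (h0L : (0 : EuclideanSpace ℝ (Fin n)) ∈ L)
    (hstar : ∀ x ∈ L, segment ℝ 0 x ⊆ L)
    {u : EuclideanSpace ℝ (Fin n)} (hu : ‖u‖ = 1) {c : ℝ}
    (hc0 : 0 ≤ c) (hle : c ≤ radial L u) : c • u ∈ L := by
  obtain ⟨hr0, hrmem, _⟩ := radial_aux hcomp h0L hu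
  rcases eq_or_lt_of_le hr0 with h | h
  · have : c = 0 := le_antisymm (by rw [← h] at hle; exact hle) hc0
    simpa [this] using h0L
  · have : c • u = (c / radial L u) • (radial L u • u) := by
      rw [smul_smul, div_mul_cancel₀ _ (ne_of_gt h)]
    rw [this]
    exact hstar _ hrmem (smul_mem_segment_zero (div_nonneg hc0 hr0)
      (div_le_one_of_le₀ hle hr0))

lemma smul_mem_interior_of_lt (hcomp : IsCompact L)
    (h0 : (0 : EuclideanSpace ℝ (Fin n)) ∈ interior L)
    (hstar : ∀ x ∈ L, segment ℝ 0 x ⊆ L)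
    (hcont : ContinuousOn (radial L) (Metric.sphere (0 : EuclideanSpace ℝ (Fin n)) 1))
    {u : EuclideanSpace ℝ (Fin n)} (hu : u ∈ Metric.sphere (0 : EuclideanSpace ℝ (Fin n)) 1)
    {c : ℝ} (hc0 : 0 ≤ c) (hlt : c < radial L u) : c • u ∈ interior L := by
  have hu1 : ‖u‖ = 1 := mem_sphere_zero_iff_norm.1 hu
  rcases hc0.eq_or_lt with rfl | hcpos
  · simpa using h0
  set m := (c + radial L u) / 2 with hmdef
  have hm1 : c < m := by rw [hmdef]; linarith
  have hm2 : m < radial L u := by rw [hmdef]; linarith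
  have h1 : ∀ᶠ u' in nhdsWithin u (Metric.sphere (0 : EuclideanSpace ℝ (Fin n)) 1),
      radial L u' ∈ Set.Ioi m := (hcont u hu).eventually (Ioi_mem_nhds hm2)
  obtain ⟨U, hUopen, hUu, hUsub⟩ := mem_nhdsWithin.1 h1
  set W : Set (EuclideanSpace ℝ (Fin n)) :=
    ({(0 : EuclideanSpace ℝ (Fin n))}ᶜ ∩ (fun y => ‖y‖⁻¹ • y) ⁻¹' U) ∩ {y | ‖y‖ < m} with hWdef
  have hnormcont : ContinuousOn (fun y : EuclideanSpace ℝ (Fin n) => ‖y‖⁻¹ • y)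
      ({(0 : EuclideanSpace ℝ (Fin n))}ᶜ) := by
    exact (continuous_norm.continuousOn.inv₀ fun y hy =>
      norm_ne_zero_iff.2 hy).smul continuousOn_id
  have hWopen : IsOpen W :=
    (hnormcont.isOpen_inter_preimage isOpen_compl_singleton hUopen).inter
      (isOpen_lt continuous_norm continuous_const)
  have hWsub : W ⊆ L := by
    rintro y ⟨⟨hy0, hyU⟩, hym⟩
    have hy0' : y ≠ 0 := hy0
    set u' := ‖y‖⁻¹ • y with hu'def
    have hu'1 : ‖u'‖ = 1 := by
      rw [hu'def, norm_smul, Real.norm_eq_abs, abs_of_nonneg (inv_nonneg.2 (norm_nonneg y)),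
        inv_mul_cancel₀ (norm_ne_zero_iff.2 hy0')]
    have hu's : u' ∈ Metric.sphere (0 : EuclideanSpace ℝ (Fin n)) 1 :=
      mem_sphere_zero_iff_norm.2 hu'1
    have hrad : m < radial L u' := hUsub ⟨hyU, hu's⟩
    have hy : y = ‖y‖ • u' := by
      rw [hu'def, smul_smul, mul_inv_cancel₀ (norm_ne_zero_iff.2 hy0'), one_smul]
    rw [hy]
    exact smul_mem_of_le_radial hcomp (interior_subset h0) hstar hu'1 (norm_nonneg y)
      (le_of_lt (lt_trans hym hrad))
  have hmem : c • u ∈ W := by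
    have hcu0 : c • u ≠ 0 := by
      simp only [ne_eq, smul_eq_zero, not_or]
      exact ⟨ne_of_gt hcpos, fun h => by simp [h] at hu1⟩
    have hnorm : ‖c • u‖ = c := by
      rw [norm_smul, hu1, mul_one, Real.norm_eq_abs, abs_of_nonneg hc0]
    refine ⟨⟨hcu0, ?_⟩, ?_⟩
    · show ‖c • u‖⁻¹ • (c • u) ∈ U
      rw [hnorm, smul_smul, inv_mul_cancel₀ (ne_of_gt hcpos), one_smul]
      exact hUu
    · show ‖c • u‖ < m
      rw [hnorm]; exact hm1
  exact mem_interior.2 ⟨W, hWsub, hWopen, hmem⟩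

lemma smul_mem_interior (hcomp : IsCompact L)
    (h0 : (0 : EuclideanSpace ℝ (Fin n)) ∈ interior L)
    (hstar : ∀ x ∈ L, segment ℝ 0 x ⊆ L)
    (hcont : ContinuousOn (radial L) (Metric.sphere (0 : EuclideanSpace ℝ (Fin n)) 1))
    {x : EuclideanSpace ℝ (Fin n)} (hx : x ∈ L) {t : ℝ} (ht0 : 0 ≤ t) (ht1 : t < 1) :
    t • x ∈ interior L := by
  rcases eq_or_ne x 0 with rfl | hx0
  · simpa using h0
  set u := ‖x‖⁻¹ • x with hudef
  have hxpos : 0 < ‖x‖ := norm_pos_iff.2 hx0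
  have hu1 : ‖u‖ = 1 := by
    rw [hudef, norm_smul, Real.norm_eq_abs, abs_of_nonneg (inv_nonneg.2 (norm_nonneg x)),
      inv_mul_cancel₀ (ne_of_gt hxpos)]
  have hxu : x = ‖x‖ • u := by
    rw [hudef, smul_smul, mul_inv_cancel₀ (ne_of_gt hxpos), one_smul]
  have hxle : ‖x‖ ≤ radial L u := by
    obtain ⟨_, _, hle⟩ := radial_aux hcomp (interior_subset h0) hu1
    exact hle _ (norm_nonneg x) (by rw [← hxu]; exact hx)
  have htx : t • x = (t * ‖x‖) • u := by rw [mul_smul, ← hxu]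
  rw [htx]
  refine smul_mem_interior_of_lt hcomp h0 hstar hcont (mem_sphere_zero_iff_norm.2 hu1)
    (mul_nonneg ht0 (norm_nonneg x)) (lt_of_lt_of_le ?_ hxle)
  nlinarith

lemma continuousOn_radial_of (hcomp : IsCompact L)
    (h0 : (0 : EuclideanSpace ℝ (Fin n)) ∈ interior L)
    (hstar : ∀ x ∈ L, segment ℝ 0 x ⊆ L)
    (hseg : ∀ x ∈ L, ∀ t : ℝ, 0 ≤ t → t < 1 → t • x ∈ interior L) :
    ContinuousOn (radial L) (Metric.sphere (0 : EuclideanSpace ℝ (Fin n)) 1) := by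
  intro u hu
  have hu1 : ‖u‖ = 1 := mem_sphere_zero_iff_norm.1 hu
  rw [Metric.continuousWithinAt_iff]
  intro ε hε
  obtain ⟨hru0, hrumem, hrule⟩ := radial_aux hcomp (interior_subset h0) hu1
  -- upper bound
  have upper : ∃ δ > 0, ∀ u' ∈ Metric.sphere (0 : EuclideanSpace ℝ (Fin n)) 1,
      dist u' u < δ → radial L u' ≤ radial L u + ε / 2 := by
    set m := radial L u + ε / 2 with hmdef
    have hm0 : 0 < m := by rw [hmdef]; linarith
    set F := L ∩ {y : EuclideanSpace ℝ (Fin n) | m ≤ ‖y‖} with hFdef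
    have hFc : IsCompact F := hcomp.inter_right (isClosed_le continuous_const continuous_norm)
    have key : ∀ δ : ℝ, (∀ y ∈ F, δ ≤ dist u (‖y‖⁻¹ • y)) →
        ∀ u' ∈ Metric.sphere (0 : EuclideanSpace ℝ (Fin n)) 1, dist u' u < δ →
        radial L u' ≤ m := by
      intro δ hδ u' hu' hd
      have hu'1 : ‖u'‖ = 1 := mem_sphere_zero_iff_norm.1 hu'
      refine csSup_le ⟨0, le_refl 0, by simpa using interior_subset h0⟩ ?_
      rintro c ⟨hc0, hcmem⟩
      by_contra hcm
      push_neg at hcm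
      have hcnorm : ‖c • u'‖ = c := by
        rw [norm_smul, hu'1, mul_one, Real.norm_eq_abs, abs_of_nonneg hc0]
      have hcF : c • u' ∈ F := ⟨hcmem, by rw [Set.mem_setOf_eq, hcnorm]; linarith⟩
      have hcpos : 0 < c := lt_trans hm0 hcm
      have hnorm : ‖c • u'‖⁻¹ • (c • u') = u' := by
        rw [hcnorm, smul_smul, inv_mul_cancel₀ (ne_of_gt hcpos), one_smul]
      have := hδ _ hcF
      rw [hnorm, dist_comm] at this
      linarith
    by_cases hFne : F.Nonempty
    · set D := (fun y : EuclideanSpace ℝ (Fin n) => ‖y‖⁻¹ • y) '' F with hDdef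
      have hF0 : ∀ y ∈ F, y ≠ 0 := by
        rintro y ⟨_, hy⟩ rfl
        simp only [Set.mem_setOf_eq, norm_zero] at hy
        linarith
      have hDc : IsCompact D := hFc.image_of_continuousOn
        (((continuous_norm.continuousOn.inv₀ fun y hy =>
          norm_ne_zero_iff.2 (hF0 y hy)).smul continuousOn_id))
      have huD : u ∉ D := by
        rintro ⟨y, hyF, hyu⟩
        have hy0 := hF0 y hyF
        have hynorm : y = ‖y‖ • u := by
          rw [← hyu, smul_smul, mul_inv_cancel₀ (norm_ne_zero_iff.2 hy0), one_smul]
        have : ‖y‖ ≤ radial L u := hrule _ (norm_nonneg y) (by rw [← hynorm]; exact hyF.1)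
        have := hyF.2
        rw [Set.mem_setOf_eq] at this
        rw [hmdef] at this
        linarith
      have hpos : 0 < Metric.infDist u D :=
        (hDc.isClosed.notMem_iff_infDist_pos (hFne.image _)).1 huD
      refine ⟨Metric.infDist u D, hpos, key _ ?_⟩
      intro y hy
      exact Metric.infDist_le_dist_of_mem ⟨y, hy, rfl⟩
    · refine ⟨1, one_pos, key 1 ?_⟩
      intro y hy
      exact absurd ⟨y, hy⟩ hFne
  -- lower bound
  have lower : ∃ δ > 0, ∀ u' ∈ Metric.sphere (0 : EuclideanSpace ℝ (Fin n)) 1,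
      dist u' u < δ → radial L u - ε / 2 ≤ radial L u' := by
    by_cases hcase : radial L u - ε / 2 ≤ 0
    · refine ⟨1, one_pos, fun u' hu' _ => ?_⟩
      have hu'1 : ‖u'‖ = 1 := mem_sphere_zero_iff_norm.1 hu'
      obtain ⟨h1, _, _⟩ := radial_aux hcomp (interior_subset h0) hu'1
      linarith
    · push_neg at hcase
      set c := radial L u - ε / 2 with hcdef
      have hc0 : 0 < c := hcase
      have hclt : c < radial L u := by rw [hcdef]; linarith
      have hrupos : 0 < radial L u := lt_trans hc0 hclt
      have hcint : c • u ∈ interior L := by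
        have h1 : (c / radial L u) • (radial L u • u) ∈ interior L := by
          refine hseg _ hrumem _ (div_nonneg (le_of_lt hc0) hru0) ?_
          rw [div_lt_one hrupos]; exact hclt
        rwa [smul_smul, div_mul_cancel₀ _ (ne_of_gt hrupos)] at h1
      obtain ⟨r, hr0, hball⟩ := Metric.mem_nhds_iff.1 (mem_interior_iff_mem_nhds.1 hcint)
      refine ⟨r / (c + 1), by positivity, fun u' hu' hd => ?_⟩
      have hmemL : c • u' ∈ L := by
        apply hball
        rw [Metric.mem_ball, dist_eq_norm, ← smul_sub, norm_smul, Real.norm_eq_abs,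
          abs_of_nonneg (le_of_lt hc0)]
        have : ‖u' - u‖ = dist u' u := (dist_eq_norm u' u).symm
        rw [this]
        calc c * dist u' u < c * (r / (c + 1)) := by
              apply mul_lt_mul_of_pos_left hd hc0
          _ ≤ r := by
              rw [mul_div_assoc']
              rw [div_le_iff₀ (by linarith)]
              nlinarith
      have hu'1 : ‖u'‖ = 1 := mem_sphere_zero_iff_norm.1 hu'
      obtain ⟨_, _, hle⟩ := radial_aux hcomp (interior_subset h0) hu'1
      exact hle _ (le_of_lt hc0) hmemL
  obtain ⟨δ₁, hδ₁, hup⟩ := upper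
  obtain ⟨δ₂, hδ₂, hlo⟩ := lower
  refine ⟨min δ₁ δ₂, lt_min hδ₁ hδ₂, fun u' hu' hd => ?_⟩
  have h1 := hup u' hu' (lt_of_lt_of_le hd (min_le_left _ _))
  have h2 := hlo u' hu' (lt_of_lt_of_le hd (min_le_right _ _))
  rw [Real.dist_eq, abs_sub_lt_iff]
  constructor <;> linarith

end StarAux

section StarAux2

variable {n : ℕ}

lemma isStarPartialHomeo_symm
    {α : PartialEquiv (EuclideanSpace ℝ (Fin n)) (EuclideanSpace ℝ (Fin n))}
    (hα : IsStarPartialHomeo α) : IsStarPartialHomeo α.symm := by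
  obtain ⟨hs, ht, hc, hcs, h0, hseg⟩ := hα
  have h0s : (0 : EuclideanSpace ℝ (Fin n)) ∈ α.source := interior_subset hs.2.1
  have hsymm0 : α.symm 0 = 0 := by
    have := α.left_inv h0s
    rwa [h0] at this
  refine ⟨ht, hs, hcs, hc, hsymm0, ?_⟩
  intro y hy
  have hx : α.symm y ∈ α.source := α.map_target hy
  have h1 : α '' segment ℝ 0 (α.symm y) = segment ℝ 0 y := by
    rw [hseg _ hx, α.right_inv hy]
  have hsub : segment ℝ 0 (α.symm y) ⊆ α.source := hs.2.2.1 _ hx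
  calc α.symm '' segment ℝ 0 y = α.symm '' (α '' segment ℝ 0 (α.symm y)) := by rw [h1]
    _ = segment ℝ 0 (α.symm y) := by
        rw [← Set.image_comp]
        have h2 : ∀ z ∈ segment ℝ 0 (α.symm y), (↑α.symm ∘ ↑α) z = id z :=
          fun z hz => α.left_inv (hsub hz)
        rw [Set.image_congr h2, Set.image_id]

lemma trans_source_star
    {α β : PartialEquiv (EuclideanSpace ℝ (Fin n)) (EuclideanSpace ℝ (Fin n))}
    (hα : IsStarPartialHomeo α) (hβ : IsStarPartialHomeo β) :
    IsStar (α.trans β).source := by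
  obtain ⟨hαs, hαt, hαc, hαcs, hα0, hαseg⟩ := hα
  obtain ⟨hβs, hβt, hβc, hβcs, hβ0, hβseg⟩ := hβ
  rw [PartialEquiv.trans_source]
  set S := α.source ∩ ↑α ⁻¹' β.source with hSdef
  have h0αs : (0 : EuclideanSpace ℝ (Fin n)) ∈ interior α.source := hαs.2.1
  have h0βs : (0 : EuclideanSpace ℝ (Fin n)) ∈ interior β.source := hβs.2.1
  have h0S : (0 : EuclideanSpace ℝ (Fin n)) ∈ interior S := by
    have hca : ContinuousAt (↑α) (0 : EuclideanSpace ℝ (Fin n)) :=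
      hαc.continuousAt (mem_interior_iff_mem_nhds.1 h0αs)
    have h2 : ↑α ⁻¹' β.source ∈ nhds (0 : EuclideanSpace ℝ (Fin n)) :=
      hca.preimage_mem_nhds (by rw [hα0]; exact mem_interior_iff_mem_nhds.1 h0βs)
    exact mem_interior_iff_mem_nhds.2
      (Filter.inter_mem (mem_interior_iff_mem_nhds.1 h0αs) h2)
  have hstarS : ∀ x ∈ S, segment ℝ 0 x ⊆ S := by
    rintro x ⟨hxα, hxβ⟩ y hy
    refine ⟨hαs.2.2.1 x hxα hy, ?_⟩
    have h1 : α y ∈ segment ℝ 0 (α x) := by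
      rw [← hαseg x hxα]; exact Set.mem_image_of_mem _ hy
    exact hβs.2.2.1 (α x) hxβ h1
  have hcompS : IsCompact S := by
    have hset : S = ↑α.symm '' (α.target ∩ β.source) := by
      ext x
      constructor
      · rintro ⟨hxs, hxb⟩
        exact ⟨α x, ⟨α.map_source hxs, hxb⟩, α.left_inv hxs⟩
      · rintro ⟨y, ⟨hyt, hyb⟩, rfl⟩
        refine ⟨α.map_target hyt, ?_⟩
        rw [Set.mem_preimage, α.right_inv hyt]
        exact hyb
    rw [hset]
    exact (hαt.1.inter_right hβs.1.isClosed).image_of_continuousOn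
      (hαcs.mono Set.inter_subset_left)
  refine ⟨hcompS, h0S, hstarS, ?_⟩
  refine continuousOn_radial_of hcompS h0S hstarS ?_
  intro x hx t ht0 ht1
  rcases eq_or_ne x 0 with rfl | hx0
  · simpa using h0S
  have htxa : t • x ∈ interior α.source :=
    smul_mem_interior hαs.1 h0αs hαs.2.2.1 hαs.2.2.2 hx.1 ht0 ht1
  have hxβ : α x ∈ β.source := hx.2
  have h1 : α (t • x) ∈ segment ℝ 0 (α x) := by
    rw [← hαseg x hx.1]
    exact Set.mem_image_of_mem _ (smul_mem_segment_zero ht0 (le_of_lt ht1))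
  obtain ⟨s, hs0, hs1, hseq⟩ := mem_segment_zero_iff.1 h1
  have hs1' : s < 1 := by
    rcases lt_or_eq_of_le hs1 with h | h
    · exact h
    · exfalso
      rw [h, one_smul] at hseq
      have hseg_src : t • x ∈ α.source :=
        hαs.2.2.1 x hx.1 (smul_mem_segment_zero ht0 (le_of_lt ht1))
      have heq := α.injOn hseg_src hx.1 hseq
      have h2 : (t - 1) • x = 0 := by rw [sub_smul, heq, one_smul, sub_self]
      rcases smul_eq_zero.1 h2 with h3 | h3
      · have : t = 1 := by linarith [sub_eq_zero.1 (by exact h3 : t - 1 = 0)]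
        linarith
      · exact hx0 h3
  have h2 : α (t • x) ∈ interior β.source := by
    rw [hseq]
    exact smul_mem_interior hβs.1 h0βs hβs.2.2.1 hβs.2.2.2 hxβ hs0 hs1'
  have hca : ContinuousAt (↑α) (t • x) :=
    hαc.continuousAt (mem_interior_iff_mem_nhds.1 htxa)
  have h3 : ↑α ⁻¹' β.source ∈ nhds (t • x) :=
    hca.preimage_mem_nhds (mem_interior_iff_mem_nhds.1 h2)
  exact mem_interior_iff_mem_nhds.2
    (Filter.inter_mem (mem_interior_iff_mem_nhds.1 htxa) h3)

end StarAux2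

theorem stmt_4 (n : ℕ) (hn : 1 ≤ n)
    (α β : PartialEquiv (EuclideanSpace ℝ (Fin n)) (EuclideanSpace ℝ (Fin n)))
    (hα : IsStarPartialHomeo α) (hβ : IsStarPartialHomeo β) :
    IsStarPartialHomeo (α.trans β) := by
  have hsrc := trans_source_star hα hβ
  have htgt : IsStar (α.trans β).target := by
    have h := trans_source_star (isStarPartialHomeo_symm hβ) (isStarPartialHomeo_symm hα)
    have heq : (β.symm.trans α.symm).source = (α.trans β).target := by
      rw [PartialEquiv.trans_source, PartialEquiv.trans_target]
      rfl
    rwa [heq] at h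
  obtain ⟨hαs, hαt, hαc, hαcs, hα0, hαseg⟩ := hα
  obtain ⟨hβs, hβt, hβc, hβcs, hβ0, hβseg⟩ := hβ
  refine ⟨hsrc, htgt, ?_, ?_, ?_, ?_⟩
  · rw [PartialEquiv.coe_trans, PartialEquiv.trans_source]
    exact hβc.comp (hαc.mono Set.inter_subset_left) (fun x hx => hx.2)
  · rw [PartialEquiv.coe_trans_symm, PartialEquiv.trans_target]
    exact hαcs.comp (hβcs.mono Set.inter_subset_left) (fun x hx => hx.2)
  · show (α.trans β) 0 = 0
    rw [PartialEquiv.trans_apply, hα0, hβ0]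
  · intro x hx
    rw [PartialEquiv.trans_source] at hx
    have hco : ⇑(α.trans β) = ↑β ∘ ↑α := PartialEquiv.coe_trans α β
    rw [hco, Set.image_comp, hαseg x hx.1, hβseg (α x) hx.2]
    rfl
end

section
/- Let n ≥ 1, let E = EuclideanSpace ℝ (Fin n), and let α and β be star partial homeomorphisms of E. Then there exists a star L in E with α ≈ β.trans (PartialEquiv.ofSet L) if and only if α.source ⊆ β.source and α agrees with β on α.source (Set.EqOn α β α.source). (This characterizes the natural partial order α ≤ β on the inverse semigroup of star partial homeomorphisms: α ≤ β iff α is a restriction of β.) -/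
/-!
This is a fact about partial equivalences alone: `α ≈ β.trans (ofSet L)` says that `α` is `β`
restricted to `β.source ∩ β ⁻¹' L`, and a restriction `α` of `β` is recovered with `L = α.target`,
which is a star because `α` is a star partial homeomorphism.
-/
namespace PartialEquiv

variable {X Y : Type*} {α β : PartialEquiv X Y}

theorem source_subset_and_eqOn_of_eqOnSource_trans_ofSet {L : Set Y}
    (h : α ≈ β.trans (ofSet L)) : α.source ⊆ β.source ∧ Set.EqOn α β α.source := by
  have hsource : α.source = β.source ∩ β ⁻¹' L := by
    simpa only [trans_source, ofSet_source] using h.source_eq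
  refine ⟨hsource ▸ Set.inter_subset_left, fun x hx => ?_⟩
  simpa using h.eqOn hx

/-- Injectivity of `β` on its source forces `β.source ∩ β ⁻¹' α.target ⊆ α.source`:
if `β x = α y` with `y ∈ α.source`, then `β x = β y`, so `x = y`. -/
theorem eqOnSource_trans_ofSet_target (hsub : α.source ⊆ β.source)
    (heq : Set.EqOn α β α.source) : α ≈ β.trans (ofSet α.target) := by
  refine ⟨?_, fun x hx => heq hx⟩
  simp only [trans_source, ofSet_source]
  ext x
  refine ⟨fun hx => ⟨hsub hx, show β x ∈ α.target from heq hx ▸ α.map_source hx⟩, ?_⟩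
  rintro ⟨hxβ, hxα : β x ∈ α.target⟩
  have hy : α.symm (β x) ∈ α.source := α.map_target hxα
  have hβy : β (α.symm (β x)) = β x := by rw [← heq hy, α.right_inv hxα]
  rwa [← β.injOn (hsub hy) hxβ hβy]

end PartialEquiv

theorem stmt_8_general (n : ℕ)
    (α β : PartialEquiv (EuclideanSpace ℝ (Fin n)) (EuclideanSpace ℝ (Fin n)))
    (hα : IsStarPartialHomeo α) :
    (∃ L : Set (EuclideanSpace ℝ (Fin n)), IsStar L ∧
        α ≈ β.trans (PartialEquiv.ofSet L)) ↔
      α.source ⊆ β.source ∧ Set.EqOn α β α.source :=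
  ⟨fun ⟨_, _, h⟩ => PartialEquiv.source_subset_and_eqOn_of_eqOnSource_trans_ofSet h,
    fun ⟨hsub, heq⟩ => ⟨α.target, hα.2.1, PartialEquiv.eqOnSource_trans_ofSet_target hsub heq⟩⟩

theorem stmt_8 (n : ℕ) (hn : 1 ≤ n)
    (α β : PartialEquiv (EuclideanSpace ℝ (Fin n)) (EuclideanSpace ℝ (Fin n)))
    (hα : IsStarPartialHomeo α) (hβ : IsStarPartialHomeo β) :
    (∃ L : Set (EuclideanSpace ℝ (Fin n)), IsStar L ∧
        α ≈ β.trans (PartialEquiv.ofSet L)) ↔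
      α.source ⊆ β.source ∧ Set.EqOn α β α.source :=
  stmt_8_general n α β hα
end

section
/- Let n ≥ 1, let E = EuclideanSpace ℝ (Fin n), and let α and β be star partial homeomorphisms of E. Then α and β generate the same principal ideal under right multiplication — that is, there exist star partial homeomorphisms γ and δ with β ≈ α.trans γ and α ≈ β.trans δ — if and only if α.source = β.source. (This describes one of the two one-sided Green relations on the semigroup of star partial homeomorphisms: it is determined by equality of domains.) -/
/-!
If `β ≈ α.trans γ` then `β.source ⊆ α.source`, so mutual divisibility forces equal
sources. Conversely, if `α.source = β.source`, then `γ := α.symm.trans β` satisfies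
`β ≈ α.trans γ`, and `γ` is again a star partial homeomorphism: the class is closed under
inverses and under composition of maps whose target and source match.
-/

namespace PartialEquiv

variable {X Y Z : Type*}

theorem source_subset_of_eqOnSource_trans {e : PartialEquiv X Y} {f : PartialEquiv Y Z}
    {g : PartialEquiv X Z} (h : g ≈ e.trans f) : g.source ⊆ e.source := by
  rw [h.source_eq, trans_source]
  exact Set.inter_subset_left

theorem trans_source_of_target_eq {e : PartialEquiv X Y} {f : PartialEquiv Y Z}
    (h : e.target = f.source) : (e.trans f).source = e.source := by
  rw [trans_source, ← h]
  exact Set.inter_eq_left.mpr fun _ hx => e.map_source hx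

theorem trans_target_of_target_eq {e : PartialEquiv X Y} {f : PartialEquiv Y Z}
    (h : e.target = f.source) : (e.trans f).target = f.target := by
  rw [← symm_source, trans_symm_eq_symm_trans_symm]
  exact trans_source_of_target_eq (by rw [symm_target, symm_source, h])

theorem eqOnSource_trans_symm_trans_of_source_eq (e : PartialEquiv X Y) {f : PartialEquiv X Z}
    (h : e.source = f.source) : f ≈ e.trans (e.symm.trans f) := by
  have hsource : (e.symm.trans f).source = e.target :=
    trans_source_of_target_eq (by rw [symm_target, h])
  refine ⟨?_, fun x hx => ?_⟩
  · rw [trans_source_of_target_eq hsource.symm, h]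
  · simp only [coe_trans, Function.comp_apply, e.left_inv (h ▸ hx)]

end PartialEquiv

namespace IsStarPartialHomeo

variable {n : ℕ} {α β : PartialEquiv (EuclideanSpace ℝ (Fin n)) (EuclideanSpace ℝ (Fin n))}

theorem zero_mem_source (hα : IsStarPartialHomeo α) :
    (0 : EuclideanSpace ℝ (Fin n)) ∈ α.source :=
  interior_subset hα.1.2.1

theorem symm_map_zero (hα : IsStarPartialHomeo α) : α.symm 0 = 0 := by
  simpa only [hα.2.2.2.2.1] using α.left_inv hα.zero_mem_source

theorem symm_image_segment (hα : IsStarPartialHomeo α) {y : EuclideanSpace ℝ (Fin n)}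
    (hy : y ∈ α.target) : α.symm '' segment ℝ 0 y = segment ℝ 0 (α.symm y) := by
  have hx : α.symm y ∈ α.source := α.map_target hy
  rw [← α.right_inv hy, ← hα.2.2.2.2.2 _ hx, α.right_inv hy,
    α.symm_image_image_of_subset_source (hα.1.2.2.1 _ hx)]

theorem symm (hα : IsStarPartialHomeo α) : IsStarPartialHomeo α.symm :=
  ⟨hα.2.1, hα.1, hα.2.2.2.1, hα.2.2.1, hα.symm_map_zero,
    fun _ hy => hα.symm_image_segment hy⟩

theorem trans (hα : IsStarPartialHomeo α) (hβ : IsStarPartialHomeo β)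
    (h : α.target = β.source) : IsStarPartialHomeo (α.trans β) := by
  have hsource := PartialEquiv.trans_source_of_target_eq h
  have htarget := PartialEquiv.trans_target_of_target_eq h
  have hmaps : Set.MapsTo α α.source β.source := h ▸ α.mapsTo
  refine ⟨hsource ▸ hα.1, htarget ▸ hβ.2.1, ?_, ?_, ?_, fun x hx => ?_⟩
  · rw [hsource]
    exact hβ.2.2.1.comp hα.2.2.1 hmaps
  · rw [htarget]
    exact hα.2.2.2.1.comp hβ.2.2.2.1 (h ▸ β.symm.mapsTo)
  · simp only [PartialEquiv.coe_trans, Function.comp_apply, hα.2.2.2.2.1, hβ.2.2.2.2.1]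
  · rw [hsource] at hx
    rw [PartialEquiv.coe_trans, Set.image_comp, hα.2.2.2.2.2 x hx, hβ.2.2.2.2.2 _ (hmaps hx)]
    rfl

end IsStarPartialHomeo

theorem stmt_9_general (n : ℕ)
    (α β : PartialEquiv (EuclideanSpace ℝ (Fin n)) (EuclideanSpace ℝ (Fin n)))
    (hα : IsStarPartialHomeo α) (hβ : IsStarPartialHomeo β) :
    (∃ γ δ : PartialEquiv (EuclideanSpace ℝ (Fin n)) (EuclideanSpace ℝ (Fin n)),
        IsStarPartialHomeo γ ∧ IsStarPartialHomeo δ ∧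
        β ≈ α.trans γ ∧ α ≈ β.trans δ) ↔ α.source = β.source := by
  constructor
  · rintro ⟨γ, δ, -, -, hβγ, hαδ⟩
    exact (PartialEquiv.source_subset_of_eqOnSource_trans hαδ).antisymm
      (PartialEquiv.source_subset_of_eqOnSource_trans hβγ)
  · intro h
    exact ⟨α.symm.trans β, β.symm.trans α, hα.symm.trans hβ h, hβ.symm.trans hα h.symm,
      α.eqOnSource_trans_symm_trans_of_source_eq h,
      β.eqOnSource_trans_symm_trans_of_source_eq h.symm⟩

theorem stmt_9 (n : ℕ) (hn : 1 ≤ n)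
    (α β : PartialEquiv (EuclideanSpace ℝ (Fin n)) (EuclideanSpace ℝ (Fin n)))
    (hα : IsStarPartialHomeo α) (hβ : IsStarPartialHomeo β) :
    (∃ γ δ : PartialEquiv (EuclideanSpace ℝ (Fin n)) (EuclideanSpace ℝ (Fin n)),
        IsStarPartialHomeo γ ∧ IsStarPartialHomeo δ ∧
        β ≈ α.trans γ ∧ α ≈ β.trans δ) ↔ α.source = β.source :=
  stmt_9_general n α β hα hβ
end

section
/- Let n ≥ 1 and let E = EuclideanSpace ℝ (Fin n). The semigroup of star partial homeomorphisms of E is bisimple: for any two star partial homeomorphisms α and β of E there exists a star partial homeomorphism γ of E with γ.source = α.source and γ.target = β.target (so that α and γ are Green L-equivalent and γ and β are Green R-equivalent, i.e. α and β are D-equivalent). -/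
namespace StarAux

variable {n : ℕ}

local notation "E" => EuclideanSpace ℝ (Fin n)

/-- basic facts about the radial function of a star at a unit vector -/
theorem radial_spec {L : Set E} (hL : IsStar L) {u : E} (hu : ‖u‖ = 1) :
    0 < radial L u ∧ ∀ c : ℝ, 0 ≤ c → (c • u ∈ L ↔ c ≤ radial L u) := by
  obtain ⟨hcomp, hint, hstar, _⟩ := hL
  have h0L : (0 : E) ∈ L := interior_subset hint
  obtain ⟨R, hR⟩ := hcomp.isBounded.subset_closedBall 0
  set S := {c : ℝ | 0 ≤ c ∧ c • u ∈ L} with hS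
  have hne : S.Nonempty := ⟨0, le_refl 0, by simpa using h0L⟩
  have hsub : S ⊆ Set.Icc 0 R := by
    rintro c ⟨hc0, hcL⟩
    refine ⟨hc0, ?_⟩
    have := hR hcL
    rw [Metric.mem_closedBall, dist_zero_right, norm_smul, hu, mul_one,
      Real.norm_eq_abs, abs_of_nonneg hc0] at this
    exact this
  have hclosed : IsClosed S := by
    have : S = Set.Ici (0:ℝ) ∩ (fun c : ℝ => c • u) ⁻¹' L := by
      ext c; simp [hS, Set.mem_setOf_eq, and_comm]
    rw [this]
    exact isClosed_Ici.inter (hcomp.isClosed.preimage (by continuity))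
  have hScomp : IsCompact S := isCompact_Icc.of_isClosed_subset hclosed hsub
  have hmem : sSup S ∈ S := hScomp.sSup_mem hne
  obtain ⟨ε, hε, hball⟩ := Metric.mem_nhds_iff.mp (mem_interior_iff_mem_nhds.mp hint)
  have hhalf : ε / 2 ∈ S := by
    refine ⟨by positivity, hball ?_⟩
    rw [Metric.mem_ball, dist_zero_right, norm_smul, hu, mul_one, Real.norm_eq_abs,
      abs_of_nonneg (by positivity)]
    linarith
  have hpos : 0 < radial L u := lt_of_lt_of_le (by positivity) (le_csSup hScomp.bddAbove hhalf)
  refine ⟨hpos, fun c hc0 => ⟨fun hcl => le_csSup hScomp.bddAbove ⟨hc0, hcl⟩, fun hcle => ?_⟩⟩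
  -- c • u ∈ segment 0 (ρ • u) ⊆ L
  have hρ : radial L u • u ∈ L := hmem.2
  have hdiv1 : c / radial L u ≤ 1 := by rw [div_le_one hpos]; exact hcle
  have hdiv0 : 0 ≤ c / radial L u := by positivity
  refine hstar _ hρ ⟨1 - c / radial L u, c / radial L u, by linarith, hdiv0, by ring, ?_⟩
  rw [smul_zero, zero_add, smul_smul, div_mul_cancel₀ _ (ne_of_gt hpos)]

theorem mem_star_iff {L : Set E} (hL : IsStar L) {x : E} (hx : x ≠ 0) :
    x ∈ L ↔ ‖x‖ ≤ radial L (‖x‖⁻¹ • x) := by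
  have hxn : ‖x‖ ≠ 0 := norm_ne_zero_iff.mpr hx
  have hu : ‖(‖x‖⁻¹ • x)‖ = 1 := by
    rw [norm_smul, Real.norm_eq_abs, abs_of_nonneg (by positivity), inv_mul_cancel₀ hxn]
  have h := (radial_spec hL hu).2 ‖x‖ (norm_nonneg x)
  rwa [smul_smul, mul_inv_cancel₀ hxn, one_smul] at h

/-- uniform upper bound for the radial function -/
theorem radial_bddAbove {L : Set E} (hL : IsStar L) :
    ∃ R : ℝ, 0 < R ∧ ∀ u : E, ‖u‖ = 1 → radial L u ≤ R := by
  obtain ⟨R, hR⟩ := hL.1.isBounded.subset_closedBall 0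
  refine ⟨max R 1, lt_of_lt_of_le one_pos (le_max_right _ _), fun u hu => ?_⟩
  have hspec := radial_spec hL hu
  have hmem : radial L u • u ∈ L := (hspec.2 _ hspec.1.le).mpr le_rfl
  have := hR hmem
  rw [Metric.mem_closedBall, dist_zero_right, norm_smul, hu, mul_one, Real.norm_eq_abs,
    abs_of_nonneg hspec.1.le] at this
  exact le_trans this (le_max_left _ _)

/-- uniform lower bound for the radial function -/
theorem radial_bddBelow {L : Set E} (hL : IsStar L) :
    ∃ ε : ℝ, 0 < ε ∧ ∀ u : E, ‖u‖ = 1 → ε ≤ radial L u := by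
  obtain ⟨ε, hε, hball⟩ := Metric.mem_nhds_iff.mp (mem_interior_iff_mem_nhds.mp hL.2.1)
  refine ⟨ε / 2, by positivity, fun u hu => ?_⟩
  have hspec := radial_spec hL hu
  refine ((hspec.2 (ε/2) (by positivity)).mp (hball ?_))
  rw [Metric.mem_ball, dist_zero_right, norm_smul, hu, mul_one, Real.norm_eq_abs,
    abs_of_nonneg (by positivity)]
  linarith

noncomputable def sc (L M : Set E) (x : E) : E :=
  (radial M (‖x‖⁻¹ • x) / radial L (‖x‖⁻¹ • x)) • x

theorem sc_zero (L M : Set E) : sc L M 0 = 0 := by simp [sc]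

theorem unit_norm {x : E} (hx : x ≠ 0) : ‖(‖x‖⁻¹ • x)‖ = 1 := by
  have hxn : ‖x‖ ≠ 0 := norm_ne_zero_iff.mpr hx
  rw [norm_smul, Real.norm_eq_abs, abs_of_nonneg (by positivity), inv_mul_cancel₀ hxn]

theorem unit_smul {x : E} (hx : x ≠ 0) {t : ℝ} (ht : 0 < t) :
    ‖t • x‖⁻¹ • (t • x) = ‖x‖⁻¹ • x := by
  have hxn : ‖x‖ ≠ 0 := norm_ne_zero_iff.mpr hx
  rw [norm_smul, Real.norm_eq_abs, abs_of_pos ht, smul_smul]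
  congr 1
  field_simp

theorem sc_smul (L M : Set E) {t : ℝ} (ht : 0 ≤ t) (x : E) :
    sc L M (t • x) = t • sc L M x := by
  rcases eq_or_ne x 0 with rfl | hx
  · simp [sc]
  rcases eq_or_lt_of_le ht with rfl | ht'
  · simp [sc]
  · rw [sc, sc, unit_smul hx ht', smul_comm]

theorem sc_ne_zero {L M : Set E} (hL : IsStar L) (hM : IsStar M) {x : E} (hx : x ≠ 0) :
    sc L M x ≠ 0 ∧ sc L M x = (radial M (‖x‖⁻¹ • x) / radial L (‖x‖⁻¹ • x)) • x ∧
      0 < radial M (‖x‖⁻¹ • x) / radial L (‖x‖⁻¹ • x) := by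
  have hu := unit_norm hx
  have h1 := (radial_spec hL hu).1
  have h2 := (radial_spec hM hu).1
  have hq : 0 < radial M (‖x‖⁻¹ • x) / radial L (‖x‖⁻¹ • x) := by positivity
  exact ⟨smul_ne_zero (ne_of_gt hq) hx, rfl, hq⟩

theorem sc_sc {L M : Set E} (hL : IsStar L) (hM : IsStar M) (x : E) :
    sc M L (sc L M x) = x := by
  rcases eq_or_ne x 0 with rfl | hx
  · simp [sc]
  obtain ⟨hne, heq, hq⟩ := sc_ne_zero hL hM hx
  have h1 := (radial_spec hL (unit_norm hx)).1
  have h2 := (radial_spec hM (unit_norm hx)).1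
  have hone : radial L (‖x‖⁻¹ • x) / radial M (‖x‖⁻¹ • x) *
      (radial M (‖x‖⁻¹ • x) / radial L (‖x‖⁻¹ • x)) = 1 := by
    rw [div_mul_div_comm, mul_comm (radial L _) (radial M _)]
    exact div_self (mul_pos h2 h1).ne'
  rw [heq, sc, unit_smul hx hq, smul_smul, hone, one_smul]

theorem sc_maps {L M : Set E} (hL : IsStar L) (hM : IsStar M) {x : E} (hx : x ∈ L) :
    sc L M x ∈ M := by
  rcases eq_or_ne x 0 with rfl | hx0
  · rw [sc_zero]; exact interior_subset hM.2.1
  obtain ⟨hne, heq, hq⟩ := sc_ne_zero hL hM hx0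
  rw [mem_star_iff hM hne, heq, unit_smul hx0 hq, norm_smul, Real.norm_eq_abs,
    abs_of_pos hq]
  have hxL : ‖x‖ ≤ radial L (‖x‖⁻¹ • x) := (mem_star_iff hL hx0).mp hx
  have h1 := (radial_spec hL (unit_norm hx0)).1
  rw [div_mul_eq_mul_div, div_le_iff₀ h1]
  exact mul_le_mul_of_nonneg_left hxL (radial_spec hM (unit_norm hx0)).1.le

theorem sc_continuousOn {L M : Set E} (hL : IsStar L) (hM : IsStar M) :
    ContinuousOn (sc L M) L := by
  have hunit : ContinuousOn (fun x : E => ‖x‖⁻¹ • x) {x : E | x ≠ 0} :=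
    (continuous_norm.continuousOn.inv₀ (fun x hx => norm_ne_zero_iff.mpr hx)).smul
      continuousOn_id
  have hmaps : Set.MapsTo (fun x : E => ‖x‖⁻¹ • x) {x : E | x ≠ 0}
      (Metric.sphere (0 : E) 1) := fun x hx => by
    rw [mem_sphere_zero_iff_norm]; exact unit_norm hx
  have hM' : ContinuousOn (fun x : E => radial M (‖x‖⁻¹ • x)) {x : E | x ≠ 0} :=
    hM.2.2.2.comp hunit hmaps
  have hL' : ContinuousOn (fun x : E => radial L (‖x‖⁻¹ • x)) {x : E | x ≠ 0} :=
    hL.2.2.2.comp hunit hmaps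
  have hco : ContinuousOn (sc L M) {x : E | x ≠ 0} :=
    ((hM'.div hL' (fun x hx => (radial_spec hL (unit_norm hx)).1.ne')).smul continuousOn_id)
  intro x hx
  rcases eq_or_ne x 0 with rfl | hx0
  · -- continuity at zero by squeeze
    obtain ⟨R, hR, hRle⟩ := radial_bddAbove hM
    obtain ⟨ε, hε, hεle⟩ := radial_bddBelow hL
    have hbound : ∀ y : E, ‖sc L M y‖ ≤ (R / ε) * ‖y‖ := by
      intro y
      rcases eq_or_ne y 0 with rfl | hy0
      · simp [sc_zero]
      have hu := unit_norm hy0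
      have h1 := (radial_spec hL hu).1
      have h2 := (radial_spec hM hu).1
      rw [sc, norm_smul, Real.norm_eq_abs,
        abs_of_nonneg (div_nonneg h2.le h1.le)]
      have hq : radial M (‖y‖⁻¹ • y) / radial L (‖y‖⁻¹ • y) ≤ R / ε :=
        div_le_div₀ (le_of_lt hR) (hRle _ hu) hε (hεle _ hu)
      exact mul_le_mul_of_nonneg_right hq (norm_nonneg y)
    have hg : Filter.Tendsto (fun y : E => (R / ε) * ‖y‖) (nhdsWithin 0 L) (nhds 0) := by
      have : Filter.Tendsto (fun y : E => (R / ε) * ‖y‖) (nhds 0) (nhds 0) := by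
        have hc : Continuous fun y : E => (R / ε) * ‖y‖ := continuous_const.mul continuous_norm
        have := hc.tendsto (0 : E)
        simpa using this
      exact this.mono_left nhdsWithin_le_nhds
    have : Filter.Tendsto (sc L M) (nhdsWithin 0 L) (nhds 0) :=
      squeeze_zero_norm hbound hg
    rw [ContinuousWithinAt, sc_zero]
    exact this
  · exact ((hco.continuousAt (IsOpen.mem_nhds isOpen_ne hx0)).continuousWithinAt)

theorem sc_segment {L M : Set E} (x : E) :
    sc L M '' segment ℝ 0 x = segment ℝ 0 (sc L M x) := by
  have seg0 : ∀ y : E, segment ℝ (0:E) y = (fun θ : ℝ => θ • y) '' Set.Icc 0 1 := by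
    intro y; rw [segment_eq_image]; simp
  rw [seg0, seg0, Set.image_image]
  exact Set.image_congr fun θ hθ => sc_smul L M hθ.1 x


noncomputable def scEquiv (L M : Set E) (hL : IsStar L) (hM : IsStar M) :
    PartialEquiv E E where
  toFun := sc L M
  invFun := sc M L
  source := L
  target := M
  map_source' := fun _ hx => sc_maps hL hM hx
  map_target' := fun _ hx => sc_maps hM hL hx
  left_inv' := fun x _ => sc_sc hL hM x
  right_inv' := fun x _ => sc_sc hM hL x

end StarAux

theorem stmt_12 (n : ℕ) (hn : 1 ≤ n)
    (α β : PartialEquiv (EuclideanSpace ℝ (Fin n)) (EuclideanSpace ℝ (Fin n)))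
    (hα : IsStarPartialHomeo α) (hβ : IsStarPartialHomeo β) :
    ∃ γ : PartialEquiv (EuclideanSpace ℝ (Fin n)) (EuclideanSpace ℝ (Fin n)),
      IsStarPartialHomeo γ ∧ γ.source = α.source ∧ γ.target = β.target := by
  obtain ⟨hLs, -, -, -, -, -⟩ := hα
  obtain ⟨-, hMt, -, -, -, -⟩ := hβ
  refine ⟨StarAux.scEquiv α.source β.target hLs hMt, ⟨hLs, hMt, ?_, ?_, ?_, ?_⟩, rfl, rfl⟩
  · exact StarAux.sc_continuousOn hLs hMt
  · exact StarAux.sc_continuousOn hMt hLs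
  · exact StarAux.sc_zero _ _
  · exact fun x _ => StarAux.sc_segment x
end

section
/- Let n ≥ 1, let E = EuclideanSpace ℝ (Fin n), and let r be a congruence on the star partial homeomorphisms of E. Let r₁ and r₂ be distinct positive real numbers and let ε₁ = PartialEquiv.ofSet (Metric.closedBall (0:E) r₁) and ε₂ = PartialEquiv.ofSet (Metric.closedBall (0:E) r₂) be the corresponding identity idempotents (closed balls of positive radius are stars). If r ε₁ ε₂, then all idempotents are r-equivalent: for all stars L₁ and L₂ in E, r (PartialEquiv.ofSet L₁) (PartialEquiv.ofSet L₂). -/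
def IsCongruence {n : ℕ}
    (r : PartialEquiv (EuclideanSpace ℝ (Fin n)) (EuclideanSpace ℝ (Fin n)) →
         PartialEquiv (EuclideanSpace ℝ (Fin n)) (EuclideanSpace ℝ (Fin n)) → Prop) : Prop :=
  (∀ α, IsStarPartialHomeo α → r α α) ∧
  (∀ α β, IsStarPartialHomeo α → IsStarPartialHomeo β → r α β → r β α) ∧
  (∀ α β γ, IsStarPartialHomeo α → IsStarPartialHomeo β → IsStarPartialHomeo γ →
    r α β → r β γ → r α γ) ∧
  (∀ α α' β β', IsStarPartialHomeo α → IsStarPartialHomeo α' →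
    IsStarPartialHomeo β → IsStarPartialHomeo β' →
    α ≈ α' → β ≈ β' → (r α β ↔ r α' β')) ∧
  (∀ α β γ, IsStarPartialHomeo α → IsStarPartialHomeo β → IsStarPartialHomeo γ →
    r α β → r (γ.trans α) (γ.trans β) ∧ r (α.trans γ) (β.trans γ))

/- ### Auxiliary lemmas -/

open Metric Set PartialEquiv

variable {n : ℕ}

abbrev E (n : ℕ) := EuclideanSpace ℝ (Fin n)

lemma cB_inter (a b : ℝ) : closedBall (0 : E n) a ∩ closedBall 0 b = closedBall 0 (min a b) := by
  ext x; simp [mem_closedBall_zero_iff, le_min_iff]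

lemma ofSet_trans_ofSet' (s s' : Set (E n)) :
    (ofSet s).trans (ofSet s') = ofSet (s ∩ s') :=
  PartialEquiv.ext (fun _ => rfl) (fun _ => rfl) (by simp [trans_source])

lemma isStar_cB {a : ℝ} (ha : 0 < a) : IsStar (closedBall (0 : E n) a) := by
  refine ⟨isCompact_closedBall _ _, ?_, ?_, ?_⟩
  · rw [interior_closedBall _ ha.ne']
    exact mem_ball_self ha
  · intro x hx
    exact (convex_closedBall _ _).segment_subset (mem_closedBall_self ha.le) hx
  · apply continuousOn_const.congr
    intro u hu
    have hu' : ‖u‖ = 1 := by simpa [mem_sphere_iff_norm] using hu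
    have hset : {c : ℝ | 0 ≤ c ∧ c • u ∈ closedBall (0 : E n) a} = Icc 0 a := by
      ext c
      simp only [mem_setOf_eq, mem_closedBall_zero_iff, norm_smul, hu', mul_one,
        Real.norm_eq_abs, mem_Icc]
      constructor
      · rintro ⟨h0, h1⟩; exact ⟨h0, by rwa [abs_of_nonneg h0] at h1⟩
      · rintro ⟨h0, h1⟩; exact ⟨h0, by rwa [abs_of_nonneg h0]⟩
    show radial _ u = a
    rw [radial, hset, csSup_Icc ha.le]
lemma isph_ofSet {L : Set (E n)} (hL : IsStar L) :
    IsStarPartialHomeo (PartialEquiv.ofSet L) := by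
  refine ⟨by simpa using hL, by simpa using hL, ?_, ?_, rfl, ?_⟩
  · rw [ofSet_coe]; exact continuousOn_id
  · rw [ofSet_symm, ofSet_coe]; exact continuousOn_id
  · intro x _
    show id '' _ = segment ℝ 0 (id x)
    simp

lemma star_zero_mem {L : Set (E n)} (hL : IsStar L) : (0 : E n) ∈ L :=
  interior_subset hL.2.1

lemma isph_symm {α : PartialEquiv (E n) (E n)} (hα : IsStarPartialHomeo α) :
    IsStarPartialHomeo α.symm := by
  obtain ⟨hs, ht, hc, hc', h0, hseg⟩ := hα
  have h0mem : (0 : E n) ∈ α.source := star_zero_mem hs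
  refine ⟨by simpa using ht, by simpa using hs, by simpa using hc', by simpa using hc, ?_, ?_⟩
  · show α.symm 0 = 0
    conv_lhs => rw [← h0]
    exact α.left_inv h0mem
  · intro y hy
    have hy' : y ∈ α.target := hy
    set x := α.symm y with hx
    have hxs : x ∈ α.source := α.map_target hy'
    have hxy : α x = y := α.right_inv hy'
    have hsub : segment ℝ 0 x ⊆ α.source := hs.2.2.1 x hxs
    have him : α '' segment ℝ 0 x = segment ℝ 0 y := by rw [hseg x hxs, hxy]
    calc α.symm '' segment ℝ 0 y = α.symm '' (α '' segment ℝ 0 x) := by rw [him]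
      _ = segment ℝ 0 x := (α.leftInvOn.mono hsub).image_image
      _ = segment ℝ 0 (α.symm y) := rfl

lemma isph_congr {α β : PartialEquiv (E n) (E n)} (h : α ≈ β)
    (hβ : IsStarPartialHomeo β) : IsStarPartialHomeo α := by
  obtain ⟨hs, ht, hc, hc', h0, hseg⟩ := hβ
  have hse : α.source = β.source := PartialEquiv.EqOnSource.source_eq h
  have hte : α.target = β.target := PartialEquiv.EqOnSource.target_eq h
  have heq : Set.EqOn α β α.source := PartialEquiv.EqOnSource.eqOn h
  have heq' : Set.EqOn α.symm β.symm α.symm.source := by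
    simpa using PartialEquiv.EqOnSource.eqOn (PartialEquiv.EqOnSource.symm' h)
  have h0mem : (0 : E n) ∈ α.source := hse ▸ star_zero_mem hs
  refine ⟨hse ▸ hs, hte ▸ ht, ?_, ?_, ?_, ?_⟩
  · exact (hse ▸ hc : ContinuousOn β α.source).congr heq
  · refine ContinuousOn.congr ?_ heq'
    simpa [hte] using hc'
  · show α 0 = 0
    rw [heq h0mem]; exact h0
  · intro x hx
    have hsub : segment ℝ 0 x ⊆ α.source := by
      rw [hse]; exact hs.2.2.1 x (hse ▸ hx)
    rw [(heq.mono hsub).image_eq, heq hx]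
    exact hseg x (hse ▸ hx)
/-- Scaling by `t` on the closed ball of radius `a`. -/
noncomputable def scale (t a : ℝ) (ht : 0 < t) : PartialEquiv (E n) (E n) where
  toFun x := t • x
  invFun x := t⁻¹ • x
  source := closedBall 0 a
  target := closedBall 0 (t * a)
  map_source' x hx := by
    rw [mem_closedBall_zero_iff] at hx ⊢
    rw [norm_smul, Real.norm_eq_abs, abs_of_pos ht]
    exact mul_le_mul_of_nonneg_left hx ht.le
  map_target' x hx := by
    rw [mem_closedBall_zero_iff] at hx ⊢
    rw [norm_smul, Real.norm_eq_abs, abs_of_pos (inv_pos.mpr ht)]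
    calc t⁻¹ * ‖x‖ ≤ t⁻¹ * (t * a) := mul_le_mul_of_nonneg_left hx (inv_pos.mpr ht).le
      _ = a := by field_simp
  left_inv' x _ := by show t⁻¹ • t • x = x; rw [smul_smul, inv_mul_cancel₀ ht.ne', one_smul]
  right_inv' x _ := by show t • t⁻¹ • x = x; rw [smul_smul, mul_inv_cancel₀ ht.ne', one_smul]

@[simp] lemma scale_source (t a : ℝ) (ht : 0 < t) :
    (scale (n := n) t a ht).source = closedBall 0 a := rfl

@[simp] lemma scale_coe (t a : ℝ) (ht : 0 < t) :
    ((scale (n := n) t a ht) : E n → E n) = fun x => t • x := rfl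

lemma smul_image_segment (t : ℝ) (x : E n) :
    (fun y => t • y) '' segment ℝ 0 x = segment ℝ 0 (t • x) := by
  have h := image_segment ℝ ((t • (LinearMap.id : E n →ₗ[ℝ] E n)).toAffineMap) 0 x
  simpa using h

lemma isph_scale {t a : ℝ} (ht : 0 < t) (ha : 0 < a) :
    IsStarPartialHomeo (scale (n := n) t a ht) := by
  refine ⟨isStar_cB ha, isStar_cB (mul_pos ht ha), ?_, ?_, ?_, ?_⟩
  · rw [scale_coe]
    exact (continuous_const_smul t).continuousOn
  · show ContinuousOn (fun x : E n => t⁻¹ • x) _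
    exact (continuous_const_smul t⁻¹).continuousOn
  · show t • (0 : E n) = 0
    simp
  · intro x _
    show (fun y => t • y) '' segment ℝ 0 x = segment ℝ 0 (t • x)
    exact smul_image_segment t x

lemma eqv_one {t a b : ℝ} (ht : 0 < t) (hba : b ≤ a) :
    (scale (n := n) t a ht).symm.trans (PartialEquiv.ofSet (closedBall 0 b)) ≈
      scale t⁻¹ (t * b) (inv_pos.mpr ht) := by
  constructor
  · rw [trans_source]
    ext x
    simp only [symm_source, mem_inter_iff, mem_preimage, ofSet_source, scale_source]
    show x ∈ closedBall (0 : E n) (t * a) ∧ t⁻¹ • x ∈ closedBall (0 : E n) b ↔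
      x ∈ closedBall (0 : E n) (t * b)
    simp only [mem_closedBall_zero_iff, norm_smul, Real.norm_eq_abs,
      abs_of_pos (inv_pos.mpr ht)]
    constructor
    · rintro ⟨_, h2⟩
      calc ‖x‖ = t * (t⁻¹ * ‖x‖) := by field_simp
        _ ≤ t * b := mul_le_mul_of_nonneg_left h2 ht.le
    · intro hx
      refine ⟨hx.trans (mul_le_mul_of_nonneg_left hba ht.le), ?_⟩
      calc t⁻¹ * ‖x‖ ≤ t⁻¹ * (t * b) := mul_le_mul_of_nonneg_left hx (inv_pos.mpr ht).le
        _ = b := by field_simp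
  · intro x _
    rfl

lemma eqv_two {t a b : ℝ} (ht : 0 < t) (hba : b ≤ a) :
    (scale (n := n) t⁻¹ (t * b) (inv_pos.mpr ht)).trans (scale t a ht) ≈
      PartialEquiv.ofSet (closedBall 0 (t * b)) := by
  constructor
  · rw [trans_source]
    ext x
    simp only [mem_inter_iff, mem_preimage, ofSet_source, scale_source]
    show x ∈ closedBall (0 : E n) (t * b) ∧ t⁻¹ • x ∈ closedBall (0 : E n) a ↔
      x ∈ closedBall (0 : E n) (t * b)
    simp only [mem_closedBall_zero_iff, norm_smul, Real.norm_eq_abs,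
      abs_of_pos (inv_pos.mpr ht)]
    constructor
    · exact fun h => h.1
    · intro hx
      refine ⟨hx, ?_⟩
      calc t⁻¹ * ‖x‖ ≤ t⁻¹ * (t * b) := mul_le_mul_of_nonneg_left hx (inv_pos.mpr ht).le
        _ = b := by field_simp
        _ ≤ a := hba
  · intro x _
    show t • t⁻¹ • x = x
    rw [smul_smul, mul_inv_cancel₀ ht.ne', one_smul]
lemma key {n : ℕ} (r : PartialEquiv (E n) (E n) → PartialEquiv (E n) (E n) → Prop)
    (hr : IsCongruence r) {a b : ℝ} (ha : 0 < a) (hab : a < b)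
    (h : r (PartialEquiv.ofSet (closedBall (0 : E n) a))
          (PartialEquiv.ofSet (closedBall (0 : E n) b))) :
    ∀ L₁ L₂ : Set (E n), IsStar L₁ → IsStar L₂ →
      r (PartialEquiv.ofSet L₁) (PartialEquiv.ofSet L₂) := by
  obtain ⟨hrefl, hsymm, htrans, hresp, hcomp⟩ := hr
  have hb : 0 < b := ha.trans hab
  have hq1 : 1 < b / a := (one_lt_div ha).mpr hab
  have hq0 : 0 < b / a := lt_trans one_pos hq1
  set ε : ℝ → PartialEquiv (E n) (E n) := fun c => PartialEquiv.ofSet (closedBall 0 c) with hε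
  -- Step 1: scaling invariance
  have P : ∀ t : ℝ, 0 < t → r (ε (t * a)) (ε (t * b)) := by
    intro t ht
    set s := scale (n := n) t b ht with hs
    have isa := isph_ofSet (n := n) (isStar_cB ha)
    have isb := isph_ofSet (n := n) (isStar_cB hb)
    have isps : IsStarPartialHomeo s := isph_scale ht hb
    have ispss : IsStarPartialHomeo s.symm := isph_symm isps
    have h1 := (hcomp _ _ s.symm isa isb ispss h).1
    have e1 := eqv_one (n := n) (a := b) (b := a) ht hab.le
    have e2 := eqv_one (n := n) (a := b) (b := b) ht le_rfl
    have i1 : IsStarPartialHomeo (scale (n := n) t⁻¹ (t * a) (inv_pos.mpr ht)) :=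
      isph_scale _ (mul_pos ht ha)
    have i2 : IsStarPartialHomeo (scale (n := n) t⁻¹ (t * b) (inv_pos.mpr ht)) :=
      isph_scale _ (mul_pos ht hb)
    have i1' := isph_congr e1 i1
    have i2' := isph_congr e2 i2
    have h2 := (hresp _ _ _ _ i1' i1 i2' i2 e1 e2).mp h1
    have h3 := (hcomp _ _ s i1 i2 isps h2).2
    have e3 := eqv_two (n := n) (a := b) (b := a) ht hab.le
    have e4 := eqv_two (n := n) (a := b) (b := b) ht le_rfl
    have j1 : IsStarPartialHomeo (ε (t * a)) := isph_ofSet (isStar_cB (mul_pos ht ha))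
    have j2 : IsStarPartialHomeo (ε (t * b)) := isph_ofSet (isStar_cB (mul_pos ht hb))
    have j1' := isph_congr e3 j1
    have j2' := isph_congr e4 j2
    exact (hresp _ _ _ _ j1' j1 j2' j2 e3 e4).mp h3
  -- Step 2: one multiplicative step
  have onestep : ∀ c d : ℝ, 0 < c → c ≤ d → d ≤ c * (b / a) → r (ε c) (ε d) := by
    intro c d hc hcd hdq
    have hP := P (c / a) (div_pos hc ha)
    have e1 : c / a * a = c := div_mul_cancel₀ c ha.ne'
    have e2 : c / a * b = c * (b / a) := by ring
    rw [e1, e2] at hP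
    have hc' : 0 < c * (b / a) := mul_pos hc hq0
    have hd : 0 < d := hc.trans_le hcd
    have hcmp := (hcomp _ _ (ε d) (isph_ofSet (isStar_cB hc)) (isph_ofSet (isStar_cB hc'))
      (isph_ofSet (isStar_cB hd)) hP).2
    rw [hε] at hcmp
    simp only [ofSet_trans_ofSet', cB_inter] at hcmp
    rw [min_eq_left hcd, min_eq_right hdq] at hcmp
    exact hcmp
  -- Step 3: iterate
  have chain : ∀ k : ℕ, ∀ c d : ℝ, 0 < c → c ≤ d → d ≤ c * (b / a) ^ k → r (ε c) (ε d) := by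
    intro k
    induction k with
    | zero =>
      intro c d hc hcd hdk
      rw [pow_zero, mul_one] at hdk
      have : c = d := le_antisymm hcd hdk
      subst this
      exact hrefl _ (isph_ofSet (isStar_cB hc))
    | succ k ih =>
      intro c d hc hcd hdk
      by_cases hcq : d ≤ c * (b / a)
      · exact onestep c d hc hcd hcq
      · push_neg at hcq
        have hc' : 0 < c * (b / a) := mul_pos hc hq0
        have hd : 0 < d := hc.trans_le hcd
        have step1 := onestep c (c * (b / a)) hc (le_mul_of_one_le_right hc.le hq1.le) le_rfl
        have step2 := ih (c * (b / a)) d hc' hcq.le (by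
          rw [pow_succ] at hdk
          calc d ≤ c * ((b / a) ^ k * (b / a)) := hdk
            _ = c * (b / a) * (b / a) ^ k := by ring)
        exact htrans _ _ _ (isph_ofSet (isStar_cB hc)) (isph_ofSet (isStar_cB hc'))
          (isph_ofSet (isStar_cB hd)) step1 step2
  -- Step 4: all balls
  have allballs : ∀ c d : ℝ, 0 < c → 0 < d → r (ε c) (ε d) := by
    have main : ∀ c d : ℝ, 0 < c → c ≤ d → r (ε c) (ε d) := by
      intro c d hc hcd
      obtain ⟨k, hk⟩ := pow_unbounded_of_one_lt (d / c) hq1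
      refine chain k c d hc hcd ?_
      have := (div_lt_iff₀ hc).mp hk
      linarith [this]
    intro c d hc hd
    rcases le_total c d with h' | h'
    · exact main c d hc h'
    · exact hsymm _ _ (isph_ofSet (isStar_cB hd)) (isph_ofSet (isStar_cB hc)) (main d c hd h')
  -- Step 5: every star is equivalent to a ball
  have starball : ∀ L : Set (E n), IsStar L → ∃ c, 0 < c ∧ r (ε c) (PartialEquiv.ofSet L) := by
    intro L hL
    obtain ⟨er, her, hball⟩ := Metric.isOpen_iff.mp isOpen_interior 0 hL.2.1
    have hsub1 : closedBall (0 : E n) (er / 2) ⊆ L :=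
      (closedBall_subset_ball (by linarith)).trans (hball.trans interior_subset)
    obtain ⟨R, hR, hsub2⟩ := (hL.1.isBounded).subset_closedBall_lt 0 0
    have hc : 0 < er / 2 := by linarith
    have hball1 := allballs (er / 2) R hc hR
    have hcmp := (hcomp _ _ (PartialEquiv.ofSet L) (isph_ofSet (isStar_cB hc))
      (isph_ofSet (isStar_cB hR)) (isph_ofSet hL) hball1).2
    simp only [ofSet_trans_ofSet'] at hcmp
    rw [inter_eq_left.mpr hsub1, inter_eq_right.mpr hsub2] at hcmp
    exact ⟨er / 2, hc, hcmp⟩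
  -- Conclusion
  intro L₁ L₂ hL₁ hL₂
  obtain ⟨c, hc, hrc⟩ := starball L₁ hL₁
  obtain ⟨d, hd, hrd⟩ := starball L₂ hL₂
  have t1 := hsymm _ _ (isph_ofSet (isStar_cB hc)) (isph_ofSet hL₁) hrc
  have t2 := allballs c d hc hd
  exact htrans _ _ _ (isph_ofSet hL₁) (isph_ofSet (isStar_cB hc)) (isph_ofSet hL₂) t1
    (htrans _ _ _ (isph_ofSet (isStar_cB hc)) (isph_ofSet (isStar_cB hd)) (isph_ofSet hL₂)
      t2 hrd)

theorem stmt_15 (n : ℕ) (hn : 1 ≤ n)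
    (r : PartialEquiv (EuclideanSpace ℝ (Fin n)) (EuclideanSpace ℝ (Fin n)) →
         PartialEquiv (EuclideanSpace ℝ (Fin n)) (EuclideanSpace ℝ (Fin n)) → Prop)
    (hr : IsCongruence r) (r₁ r₂ : ℝ) (hr₁ : 0 < r₁) (hr₂ : 0 < r₂) (hne : r₁ ≠ r₂)
    (h : r (PartialEquiv.ofSet (Metric.closedBall (0 : EuclideanSpace ℝ (Fin n)) r₁))
          (PartialEquiv.ofSet (Metric.closedBall (0 : EuclideanSpace ℝ (Fin n)) r₂))) :
    ∀ L₁ L₂ : Set (EuclideanSpace ℝ (Fin n)), IsStar L₁ → IsStar L₂ →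
      r (PartialEquiv.ofSet L₁) (PartialEquiv.ofSet L₂) := by
  rcases hne.lt_or_gt with hlt | hlt
  · exact key r hr hr₁ hlt h
  · have h' := hr.2.1 _ _ (isph_ofSet (isStar_cB hr₁)) (isph_ofSet (isStar_cB hr₂)) h
    exact key r hr hr₂ hlt h'
end
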